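/- arXiv:2105.11591 — 6 statements merged into one kernel-verified Lean document; each statement's English description precedes it below -/
import Mathlib

section
/- Let ξ be a real-valued random variable whose distribution is symmetric about the origin. Fix k > 0 and a real μ with 0 < |μ| < 2k. Then the scaled Huber function satisfies E[H̃_k(ξ + μ) − H̃_k(ξ)] ≥ (μ²/2)·P(−k ≤ ξ ≤ k − |μ|). -/
open MeasureTheory

/-- The Huber function `H_k`. -/
noncomputable def huber (k x : ℝ) : ℝ := if |x| ≤ k then x ^ 2 / 2 else k * (|x| - k / 2)

/-- The scaled Huber function `H̃_k = ((k+1)/k) H_k`. -/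
noncomputable def huberScaled (k x : ℝ) : ℝ := ((k + 1) / k) * huber k x

lemma huber_even (k x : ℝ) : huber k (-x) = huber k x := by
  simp [huber, abs_neg]

lemma huber_of_le {k x : ℝ} (h : |x| ≤ k) : huber k x = x ^ 2 / 2 := if_pos h

lemma huber_of_gt {k x : ℝ} (h : k < |x|) : huber k x = k * (|x| - k / 2) := if_neg (not_le.2 h)

lemma huber_mono_lip {k v u : ℝ} (hk : 0 < k) (hv : 0 ≤ v) (huv : v ≤ u) :
    huber k v ≤ huber k u ∧ huber k u - huber k v ≤ k * (u - v) := by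
  have hu : 0 ≤ u := le_trans hv huv
  rcases le_or_gt u k with h1 | h1
  · rw [huber_of_le (x := v) (by rw [abs_of_nonneg hv]; linarith), huber_of_le (x := u) (by rwa [abs_of_nonneg hu])]
    constructor <;> nlinarith
  · rcases le_or_gt v k with h2 | h2
    · rw [huber_of_le (x := v) (by rwa [abs_of_nonneg hv]), huber_of_gt (x := u) (by rwa [abs_of_nonneg hu]),
        abs_of_nonneg hu]
      constructor <;> nlinarith
    · rw [huber_of_gt (x := v) (by rwa [abs_of_nonneg hv]), huber_of_gt (x := u) (by rwa [abs_of_nonneg hu]),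
        abs_of_nonneg hu, abs_of_nonneg hv]
      constructor <;> nlinarith

lemma huber_abs (k x : ℝ) : huber k x = huber k |x| := by
  unfold huber; rw [abs_abs, sq_abs]

lemma huber_lip {k : ℝ} (hk : 0 < k) (x y : ℝ) :
    |huber k x - huber k y| ≤ k * |x - y| := by
  have key : ∀ p q : ℝ, huber k p - huber k q ≤ k * |p - q| := by
    intro p q
    rcases le_total |q| |p| with h | h
    · have := (huber_mono_lip hk (abs_nonneg q) h).2
      calc huber k p - huber k q = huber k |p| - huber k |q| := by rw [huber_abs k p, huber_abs k q]
        _ ≤ k * (|p| - |q|) := this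
        _ ≤ k * |p - q| := by
            have := abs_sub_abs_le_abs_sub p q
            nlinarith [abs_nonneg (p - q)]
    · have := (huber_mono_lip hk (abs_nonneg p) h).1
      have h2 : huber k p - huber k q ≤ 0 := by
        rw [huber_abs k p, huber_abs k q]; linarith
      have := abs_nonneg (p - q)
      nlinarith
  rw [abs_sub_le_iff]
  exact ⟨key x y, by rw [abs_sub_comm]; exact key y x⟩

lemma sd_eq {k b x : ℝ} (hb : 0 ≤ b) (h : |x| ≤ k - b) :
    huber k (x + b) + huber k (x - b) - 2 * huber k x = b ^ 2 := by
  rw [abs_le] at h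
  rw [huber_of_le (abs_le.2 ⟨by linarith, by linarith⟩),
      huber_of_le (x := x - b) (abs_le.2 ⟨by linarith, by linarith⟩),
      huber_of_le (x := x) (abs_le.2 ⟨by linarith, by linarith⟩)]
  ring

lemma sd_nonneg_aux {k b x : ℝ} (hk : 0 < k) (hb : 0 < b) (hx : 0 ≤ x) :
    0 ≤ huber k (x + b) + huber k (x - b) - 2 * huber k x := by
  by_cases h1 : x + b ≤ k
  · rw [sd_eq hb.le (abs_le.2 ⟨by linarith, by linarith⟩)]; positivity
  push_neg at h1
  have hxb : k < |x + b| := by rw [abs_of_nonneg (by linarith)]; exact h1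
  rcases le_or_gt x k with h2 | h2
  · have hx' : |x| ≤ k := abs_le.2 ⟨by linarith, h2⟩
    rcases le_or_gt (-k) (x - b) with h3 | h3
    · have : |x - b| ≤ k := abs_le.2 ⟨h3, by linarith⟩
      rw [huber_of_gt hxb, huber_of_le this, huber_of_le hx', abs_of_nonneg (by linarith : (0:ℝ) ≤ x + b)]
      nlinarith [mul_nonneg (by linarith : (0:ℝ) ≤ k - x) (by linarith : (0:ℝ) ≤ x - k + 2*b)]
    · have h3' : k < |x - b| := by rw [abs_of_neg (by linarith)]; linarith
      rw [huber_of_gt hxb, huber_of_gt h3', huber_of_le hx',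
        abs_of_nonneg (by linarith : (0:ℝ) ≤ x + b), abs_of_neg (by linarith : x - b < 0)]
      nlinarith [mul_nonneg (by linarith : (0:ℝ) ≤ k - x) (by linarith : (0:ℝ) ≤ b - k - x)]
  · have hx' : k < |x| := by rwa [abs_of_nonneg hx]
    rcases le_or_gt (-k) (x - b) with h3 | h3
    · rcases le_or_gt (x - b) k with h4 | h4
      · rw [huber_of_gt hxb, huber_of_le (abs_le.2 ⟨h3, h4⟩), huber_of_gt hx',
          abs_of_nonneg (by linarith : (0:ℝ) ≤ x + b), abs_of_nonneg hx]
        nlinarith [sq_nonneg (x - b - k)]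
      · rw [huber_of_gt hxb, huber_of_gt (x := x - b) (by rw [abs_of_pos (by linarith)]; linarith),
          huber_of_gt hx', abs_of_nonneg (by linarith : (0:ℝ) ≤ x + b), abs_of_pos (by linarith : (0:ℝ) < x - b), abs_of_nonneg hx]
        ring_nf
        nlinarith
    · rw [huber_of_gt hxb, huber_of_gt (x := x - b) (by rw [abs_of_neg (by linarith)]; linarith),
        huber_of_gt hx', abs_of_nonneg (by linarith : (0:ℝ) ≤ x + b), abs_of_neg (by linarith : x - b < 0), abs_of_nonneg hx]
      nlinarith

lemma sd_nonneg {k b x : ℝ} (hk : 0 < k) (hb : 0 < b) :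
    0 ≤ huber k (x + b) + huber k (x - b) - 2 * huber k x := by
  rcases le_or_gt 0 x with hx | hx
  · exact sd_nonneg_aux hk hb hx
  · have := sd_nonneg_aux hk hb (x := -x) (by linarith)
    rw [show -x + b = -(x - b) by ring, show -x - b = -(x + b) by ring,
      huber_even, huber_even, huber_even] at this
    linarith

lemma sd_lb {k b x : ℝ} (hk : 0 < k) (hb : 0 < b) (hb2 : b < 2 * k)
    (h1 : b - k ≤ x) (h2 : x ≤ k) :
    b ^ 2 / 2 ≤ huber k (x + b) + huber k (x - b) - 2 * huber k x := by
  rcases le_or_gt 0 x with hx | hx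
  · rcases le_or_gt x (k - b) with h3 | h3
    · rw [sd_eq hb.le (abs_le.2 ⟨by linarith, h3⟩)]; nlinarith
    · have hxb : k < |x + b| := by rw [abs_of_nonneg (by linarith)]; linarith
      have hxb' : |x - b| ≤ k := abs_le.2 ⟨by linarith, by linarith⟩
      rw [huber_of_gt hxb, huber_of_le hxb', huber_of_le (abs_le.2 ⟨by linarith, h2⟩),
        abs_of_nonneg (by linarith : (0:ℝ) ≤ x + b)]
      nlinarith [mul_nonneg (by linarith : (0:ℝ) ≤ k - x) (by linarith : (0:ℝ) ≤ x - k + 2*b)]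
  · have hbk : b ≤ k := by linarith
    rw [sd_eq hb.le (abs_le.2 ⟨by linarith, by linarith⟩)]; nlinarith

lemma hsum_eq {k a : ℝ} (x : ℝ) :
    (huberScaled k (x + a) - huberScaled k x) + (huberScaled k (-x + a) - huberScaled k (-x))
      = ((k + 1) / k) * (huber k (x + |a|) + huber k (x - |a|) - 2 * huber k x) := by
  unfold huberScaled
  rcases abs_cases a with ⟨h, h'⟩ | ⟨h, h'⟩ <;> rw [h]
  · rw [show -x + a = -(x - a) by ring, huber_even, huber_even]; ring
  · rw [show -x + a = -(x - a) by ring, huber_even, huber_even,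
      show x - -a = x + a by ring, show x + -a = x - a by ring]; ring

lemma key_pointwise {k a : ℝ} (hk : 0 < k) (ha0 : 0 < |a|) (ha : |a| < 2 * k) (x : ℝ) :
    a ^ 2 / 2 * ((Set.Icc (-k) (k - |a|)).indicator (1 : ℝ → ℝ) x
        + (Set.Icc (|a| - k) k).indicator (1 : ℝ → ℝ) x)
      ≤ (huberScaled k (x + a) - huberScaled k x)
        + (huberScaled k (-x + a) - huberScaled k (-x)) := by
  rw [hsum_eq]
  set b := |a| with hbdef
  have hab : a ^ 2 = b ^ 2 := (sq_abs a).symm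
  have hD0 := sd_nonneg (x := x) hk ha0
  set D := huber k (x + b) + huber k (x - b) - 2 * huber k x with hDdef
  have hfac : D ≤ ((k + 1) / k) * D := by
    rw [div_mul_eq_mul_div, le_div_iff₀ hk]; nlinarith
  by_cases h1 : x ∈ Set.Icc (-k) (k - b) <;> by_cases h2 : x ∈ Set.Icc (b - k) k <;>
    [rw [Set.indicator_of_mem h1, Set.indicator_of_mem h2];
     rw [Set.indicator_of_mem h1, Set.indicator_of_notMem h2];
     rw [Set.indicator_of_notMem h1, Set.indicator_of_mem h2];
     rw [Set.indicator_of_notMem h1, Set.indicator_of_notMem h2]] <;>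
    rw [hab] <;> simp only [Pi.one_apply, add_zero, zero_add, mul_zero, mul_one]
  · obtain ⟨h1a, h1b⟩ := h1
    obtain ⟨h2a, h2b⟩ := h2
    have : D = b ^ 2 := sd_eq ha0.le (abs_le.2 ⟨by linarith, h1b⟩)
    nlinarith
  · obtain ⟨h1a, h1b⟩ := h1
    have h := sd_lb (x := -x) hk ha0 ha (by linarith) (by linarith)
    rw [show -x + b = -(x - b) by ring, show -x - b = -(x + b) by ring,
      huber_even, huber_even, huber_even] at h
    have : b ^ 2 / 2 ≤ D := by rw [hDdef]; linarith
    linarith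
  · obtain ⟨h2a, h2b⟩ := h2
    have h : b ^ 2 / 2 ≤ D := sd_lb hk ha0 ha h2a h2b
    linarith
  · have : (0:ℝ) ≤ ((k + 1) / k) * D := by positivity
    linarith

lemma huber_measurable (k : ℝ) : Measurable (huber k) := by
  unfold huber
  exact Measurable.ite (measurableSet_le measurable_id.abs measurable_const)
    (by fun_prop) (by fun_prop)

lemma huberScaled_measurable (k : ℝ) : Measurable (huberScaled k) :=
  (huber_measurable k).const_mul _

/-- If `ξ` is symmetric about the origin, `k > 0` and `0 < |a| < 2k`, then
`E[H̃_k(ξ + a) − H̃_k(ξ)] ≥ (a²/2)·P(−k ≤ ξ ≤ k − |a|)`. -/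
theorem stmt0 {Ω : Type*} [MeasurableSpace Ω] (P : Measure Ω) [IsProbabilityMeasure P]
    (ξ : Ω → ℝ) (hmeas : Measurable ξ)
    (hsym : P.map ξ = P.map (fun ω => -ξ ω))
    (k a : ℝ) (hk : 0 < k) (ha0 : 0 < |a|) (ha : |a| < 2 * k) :
    a ^ 2 / 2 * (P {ω | -k ≤ ξ ω ∧ ξ ω ≤ k - |a|}).toReal ≤
      ∫ ω, (huberScaled k (ξ ω + a) - huberScaled k (ξ ω)) ∂P := by
  set b := |a| with hbdef
  set F : ℝ → ℝ := fun x => huberScaled k (x + a) - huberScaled k x with hFdef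
  have hmeasF : Measurable F :=
    ((huberScaled_measurable k).comp (measurable_id.add_const a)).sub (huberScaled_measurable k)
  -- bound on F
  have hbound : ∀ x : ℝ, ‖F x‖ ≤ (k + 1) * b := by
    intro x
    have h1 : |huber k (x + a) - huber k x| ≤ k * b := by
      have := huber_lip hk (x + a) x
      rwa [show x + a - x = a by ring] at this
    have h2 : (0:ℝ) ≤ (k + 1) / k := by positivity
    have : ‖F x‖ = (k + 1) / k * |huber k (x + a) - huber k x| := by
      rw [hFdef]
      simp only [huberScaled]
      rw [show ((k+1)/k) * huber k (x+a) - ((k+1)/k) * huber k x = ((k+1)/k) * (huber k (x+a) - huber k x) by ring,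
        Real.norm_eq_abs, abs_mul, abs_of_nonneg h2]
    rw [this]
    calc (k + 1) / k * |huber k (x + a) - huber k x| ≤ (k + 1) / k * (k * b) := by
            apply mul_le_mul_of_nonneg_left h1 h2
      _ = (k + 1) * b := by field_simp
  have hInt : Integrable (fun ω => F (ξ ω)) P := by
    refine Integrable.mono' (integrable_const ((k + 1) * b))
      ((hmeasF.comp hmeas).aestronglyMeasurable) (ae_of_all _ fun ω => hbound _)
  have hIntneg : Integrable (fun ω => F (-ξ ω)) P := by
    refine Integrable.mono' (integrable_const ((k + 1) * b))
      ((hmeasF.comp hmeas.neg).aestronglyMeasurable) (ae_of_all _ fun ω => hbound _)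
  -- symmetry of the integral
  have hchg : ∫ ω, F (ξ ω) ∂P = ∫ ω, F (-ξ ω) ∂P := by
    rw [← integral_map hmeas.aemeasurable hmeasF.aestronglyMeasurable, hsym,
      integral_map (φ := fun ω => -ξ ω) hmeas.neg.aemeasurable hmeasF.aestronglyMeasurable]
  -- events
  have hEset : {ω | -k ≤ ξ ω ∧ ξ ω ≤ k - b} = ξ ⁻¹' (Set.Icc (-k) (k - b)) := rfl
  have hPP : P (ξ ⁻¹' Set.Icc (-k) (k - b)) = P (ξ ⁻¹' Set.Icc (b - k) k) := by
    rw [← Measure.map_apply hmeas measurableSet_Icc, hsym,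
      Measure.map_apply (f := fun ω => -ξ ω) hmeas.neg measurableSet_Icc]
    congr 1
    ext ω
    simp only [Set.mem_preimage, Set.mem_Icc]
    constructor <;> rintro ⟨u, v⟩ <;> exact ⟨by linarith, by linarith⟩
  -- indicator integrals
  have hindint : ∀ s : Set ℝ, MeasurableSet s →
      Integrable (fun ω => s.indicator (1 : ℝ → ℝ) (ξ ω)) P ∧
      ∫ ω, s.indicator (1 : ℝ → ℝ) (ξ ω) ∂P = (P (ξ ⁻¹' s)).toReal := by
    intro s hs
    have hcomp : (fun ω => s.indicator (1 : ℝ → ℝ) (ξ ω)) = (ξ ⁻¹' s).indicator (1 : Ω → ℝ) := by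
      funext ω
      by_cases h : ξ ω ∈ s <;> simp [Set.indicator_apply, Set.mem_preimage, h]
    rw [hcomp]
    exact ⟨(integrable_const (1:ℝ)).indicator (hmeas hs), integral_indicator_one (hmeas hs)⟩
  obtain ⟨hi1, he1⟩ := hindint (Set.Icc (-k) (k - b)) measurableSet_Icc
  obtain ⟨hi2, he2⟩ := hindint (Set.Icc (b - k) k) measurableSet_Icc
  -- main chain
  have hmain : a ^ 2 / 2 * (P {ω | -k ≤ ξ ω ∧ ξ ω ≤ k - b}).toReal
      = ∫ ω, a ^ 2 / 4 * ((Set.Icc (-k) (k - b)).indicator (1 : ℝ → ℝ) (ξ ω)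
          + (Set.Icc (b - k) k).indicator (1 : ℝ → ℝ) (ξ ω)) ∂P := by
    rw [integral_const_mul, integral_add hi1 hi2, he1, he2, hEset, ← hPP]
    ring
  have hrhs : ∫ ω, F (ξ ω) ∂P = ∫ ω, (F (ξ ω) + F (-ξ ω)) / 2 ∂P := by
    have h : ∫ ω, (F (ξ ω) + F (-ξ ω)) / 2 ∂P = (∫ ω, F (ξ ω) ∂P + ∫ ω, F (-ξ ω) ∂P) / 2 := by
      rw [integral_div, integral_add hInt hIntneg]
    rw [h, ← hchg]; ring
  have hmono : ∫ ω, a ^ 2 / 4 * ((Set.Icc (-k) (k - b)).indicator (1 : ℝ → ℝ) (ξ ω)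
          + (Set.Icc (b - k) k).indicator (1 : ℝ → ℝ) (ξ ω)) ∂P
      ≤ ∫ ω, (F (ξ ω) + F (-ξ ω)) / 2 ∂P := by
    refine integral_mono ((hi1.add hi2).const_mul _) ((hInt.add hIntneg).div_const 2) ?_
    intro ω
    have := key_pointwise hk ha0 ha (ξ ω)
    simp only [hFdef]
    linarith
  calc a ^ 2 / 2 * (P {ω | -k ≤ ξ ω ∧ ξ ω ≤ k - b}).toReal
      = ∫ ω, a ^ 2 / 4 * ((Set.Icc (-k) (k - b)).indicator (1 : ℝ → ℝ) (ξ ω)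
          + (Set.Icc (b - k) k).indicator (1 : ℝ → ℝ) (ξ ω)) ∂P := hmain
    _ ≤ ∫ ω, (F (ξ ω) + F (-ξ ω)) / 2 ∂P := hmono
    _ = ∫ ω, F (ξ ω) ∂P := hrhs.symm
end

section
/- Let ξ be a real-valued random variable whose distribution is symmetric about the origin and has a density f_ξ with respect to Lebesgue measure, with f_ξ(0) > 0. Suppose δ > 0 is such that f_ξ(x) ≥ f_ξ(0)/2 for all |x| ≤ δ. Then for every real μ with 0 < |μ| ≤ δ, E[|ξ + μ| − |ξ|] ≥ (μ²/2)·f_ξ(0). -/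
open MeasureTheory
open scoped ENNReal NNReal

/-- For `|x| ≤ |a|`, `|x + a| + |x - a| = 2 * |a|`. -/
lemma aux_abs_sum {a x : ℝ} (hx : |x| ≤ |a|) : |x + a| + |x - a| = 2 * |a| := by
  rcases le_total 0 a with ha | ha
  · rw [abs_of_nonneg ha] at hx ⊢
    rw [abs_le] at hx
    rw [abs_of_nonneg (by linarith), abs_of_nonpos (by linarith)]
    ring
  · rw [abs_of_nonpos ha] at hx ⊢
    rw [abs_le] at hx
    rw [abs_of_nonpos (by linarith), abs_of_nonneg (by linarith)]
    ring

/-- The tent integral. -/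
lemma aux_tent (c b : ℝ) (hb : 0 ≤ b) :
    ∫ x in Set.Ioc (-b) b, c * (b - |x|) = c * b ^ 2 := by
  have hcont : Continuous (fun x : ℝ => c * (b - |x|)) :=
    continuous_const.mul (continuous_const.sub continuous_abs)
  rw [← intervalIntegral.integral_of_le (by linarith : -b ≤ b)]
  have hint1 : IntervalIntegrable (fun x : ℝ => c * (b - |x|)) volume (-b) 0 :=
    hcont.intervalIntegrable _ _
  have hint2 : IntervalIntegrable (fun x : ℝ => c * (b - |x|)) volume 0 b :=
    hcont.intervalIntegrable _ _
  rw [← intervalIntegral.integral_add_adjacent_intervals hint1 hint2]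
  have h1 : ∫ x in (-b)..(0:ℝ), c * (b - |x|) = ∫ x in (-b)..(0:ℝ), (c * b + c * x) := by
    apply intervalIntegral.integral_congr
    intro x hx
    rw [Set.uIcc_of_le (by linarith : -b ≤ (0:ℝ))] at hx
    show c * (b - |x|) = c * b + c * x
    rw [abs_of_nonpos hx.2]; ring
  have h2 : ∫ x in (0:ℝ)..b, c * (b - |x|) = ∫ x in (0:ℝ)..b, (c * b - c * x) := by
    apply intervalIntegral.integral_congr
    intro x hx
    rw [Set.uIcc_of_le hb] at hx
    show c * (b - |x|) = c * b - c * x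
    rw [abs_of_nonneg hx.1]; ring
  have hc : IntervalIntegrable (fun _ : ℝ => c * b) volume (-b) 0 := intervalIntegrable_const
  have hc2 : IntervalIntegrable (fun _ : ℝ => c * b) volume 0 b := intervalIntegrable_const
  have hx1 : IntervalIntegrable (fun x : ℝ => c * x) volume (-b) 0 :=
    (continuous_const.mul continuous_id).intervalIntegrable _ _
  have hx2 : IntervalIntegrable (fun x : ℝ => c * x) volume 0 b :=
    (continuous_const.mul continuous_id).intervalIntegrable _ _
  rw [h1, h2]
  rw [intervalIntegral.integral_add hc hx1, intervalIntegral.integral_sub hc2 hx2]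
  simp only [intervalIntegral.integral_const, smul_eq_mul]
  rw [intervalIntegral.integral_const_mul, intervalIntegral.integral_const_mul,
    integral_id, integral_id]
  ring

/-- If `ξ` is symmetric about the origin with Lebesgue density `f`, `f 0 > 0`, and
`f x ≥ f 0 / 2` for `|x| ≤ δ`, then for `0 < |a| ≤ δ` we have
`E[|ξ + a| − |ξ|] ≥ (a²/2)·f 0`. -/
theorem stmt1 {Ω : Type*} [MeasurableSpace Ω] (P : Measure Ω) [IsProbabilityMeasure P]
    (ξ : Ω → ℝ) (hmeas : Measurable ξ)
    (f : ℝ → ℝ) (hfmeas : Measurable f) (hfnn : ∀ x, 0 ≤ f x)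
    (hdens : P.map ξ = volume.withDensity (fun x => ENNReal.ofReal (f x)))
    (hsym : P.map ξ = P.map (fun ω => -ξ ω))
    (hf0 : 0 < f 0) (δ : ℝ) (hδ : 0 < δ)
    (hlb : ∀ x : ℝ, |x| ≤ δ → f 0 / 2 ≤ f x)
    (a : ℝ) (ha0 : 0 < |a|) (haδ : |a| ≤ δ) :
    a ^ 2 / 2 * f 0 ≤ ∫ ω, (|ξ ω + a| - |ξ ω|) ∂P := by
  set g : ℝ → ℝ := fun x => |x + a| - |x| with hgdef
  set g' : ℝ → ℝ := fun x => |x - a| - |x| with hg'def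
  set h : ℝ → ℝ := fun x => |x + a| + |x - a| - 2 * |x| with hhdef
  have hgmeas : Measurable g := ((measurable_id.add_const a).abs).sub measurable_id.abs
  have hg'meas : Measurable g' := ((measurable_id.sub_const a).abs).sub measurable_id.abs
  have hhmeas : Measurable h :=
    (((measurable_id.add_const a).abs).add ((measurable_id.sub_const a).abs)).sub
      (measurable_const.mul measurable_id.abs)
  have hh_nonneg : ∀ x, 0 ≤ h x := by
    intro x
    have : |(x + a) + (x - a)| ≤ |x + a| + |x - a| := abs_add_le _ _
    have h2 : |(x + a) + (x - a)| = 2 * |x| := by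
      rw [show (x + a) + (x - a) = 2 * x by ring, abs_mul]
      simp
    simp only [hhdef]
    linarith [h2 ▸ this]
  have hh_le : ∀ x, h x ≤ 2 * |a| := by
    intro x
    have h1 : |x + a| ≤ |x| + |a| := abs_add_le _ _
    have h2 : |x - a| ≤ |x| + |a| := abs_sub _ _
    simp only [hhdef]
    linarith
  haveI : IsProbabilityMeasure (P.map ξ) := Measure.isProbabilityMeasure_map hmeas.aemeasurable
  -- integrability of g and g' w.r.t. the law ν
  have hgbound : ∀ x, ‖g x‖ ≤ |a| := by
    intro x
    simp only [hgdef, Real.norm_eq_abs]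
    have := abs_abs_sub_abs_le_abs_sub (x + a) x
    simpa using this
  have hg'bound : ∀ x, ‖g' x‖ ≤ |a| := by
    intro x
    simp only [hg'def, Real.norm_eq_abs]
    have := abs_abs_sub_abs_le_abs_sub (x - a) x
    simpa using this
  have hgint : Integrable g (P.map ξ) :=
    (integrable_const (|a| : ℝ)).mono' hgmeas.aestronglyMeasurable (ae_of_all _ hgbound)
  have hg'int : Integrable g' (P.map ξ) :=
    (integrable_const (|a| : ℝ)).mono' hg'meas.aestronglyMeasurable (ae_of_all _ hg'bound)
  -- the expectation equals ∫ g dν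
  have hE : ∫ ω, (|ξ ω + a| - |ξ ω|) ∂P = ∫ x, g x ∂(P.map ξ) :=
    (integral_map hmeas.aemeasurable hgmeas.aestronglyMeasurable).symm
  -- symmetry: ∫ g dν = ∫ g' dν
  have hsym2 : ∫ x, g x ∂(P.map ξ) = ∫ x, g' x ∂(P.map ξ) := by
    calc ∫ x, g x ∂(P.map ξ) = ∫ x, g x ∂(P.map (fun ω => -ξ ω)) := by rw [← hsym]
      _ = ∫ ω, g (-ξ ω) ∂P :=
          integral_map (hmeas.neg).aemeasurable hgmeas.aestronglyMeasurable
      _ = ∫ ω, g' (ξ ω) ∂P := by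
          congr 1
          ext ω
          simp only [hgdef, hg'def]
          rw [abs_neg, neg_add_eq_sub, abs_sub_comm]
      _ = ∫ x, g' x ∂(P.map ξ) :=
          (integral_map hmeas.aemeasurable hg'meas.aestronglyMeasurable).symm
  -- 2 ∫ g = ∫ h
  have hdouble : 2 * ∫ x, g x ∂(P.map ξ) = ∫ x, h x ∂(P.map ξ) := by
    have : ∫ x, g x ∂(P.map ξ) + ∫ x, g' x ∂(P.map ξ) = ∫ x, h x ∂(P.map ξ) := by
      rw [← integral_add hgint hg'int]
      congr 1
      ext x
      simp only [hgdef, hg'def, hhdef]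
      ring
    linarith [hsym2, this]
  -- density: ∫ h dν = ∫ f * h dλ
  have hdensity : ∫ x, h x ∂(P.map ξ) = ∫ x, f x * h x := by
    rw [hdens]
    have heq : (fun x => ENNReal.ofReal (f x)) = fun x => ((Real.toNNReal (f x) : NNReal) : ENNReal) :=
      rfl
    rw [heq, integral_withDensity_eq_integral_smul hfmeas.real_toNNReal]
    congr 1
    ext x
    simp [NNReal.smul_def, Real.coe_toNNReal _ (hfnn x)]
  -- f is integrable
  have hfint : Integrable f := by
    refine ⟨hfmeas.aestronglyMeasurable, ?_⟩
    have h1 : ∫⁻ x, ENNReal.ofReal (f x) = 1 := by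
      have huniv : (P.map ξ) Set.univ = 1 := measure_univ
      rw [hdens, withDensity_apply _ MeasurableSet.univ, setLIntegral_univ] at huniv
      exact huniv
    rw [hasFiniteIntegral_def]
    have : ∀ x : ℝ, ‖f x‖ₑ = ENNReal.ofReal (f x) := fun x =>
      Real.enorm_eq_ofReal (hfnn x)
    simp_rw [this, h1]
    exact ENNReal.one_lt_top
  -- f * h is integrable
  have hfhint : Integrable (fun x => f x * h x) := by
    refine (hfint.const_mul (2 * |a|)).mono' ((hfmeas.mul hhmeas).aestronglyMeasurable)
      (ae_of_all _ fun x => ?_)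
    rw [Real.norm_eq_abs, abs_mul, abs_of_nonneg (hfnn x), abs_of_nonneg (hh_nonneg x)]
    calc f x * h x ≤ f x * (2 * |a|) := mul_le_mul_of_nonneg_left (hh_le x) (hfnn x)
      _ = 2 * |a| * f x := by ring
  -- lower bound on the set integral
  have hset : ∫ x in Set.Ioc (-|a|) |a|, f 0 * (|a| - |x|) ≤
      ∫ x in Set.Ioc (-|a|) |a|, f x * h x := by
    apply setIntegral_mono_on
    · exact (continuous_const.mul (continuous_const.sub continuous_abs)).integrableOn_Ioc
    · exact hfhint.integrableOn
    · exact measurableSet_Ioc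
    · intro x hx
      have hxle : |x| ≤ |a| := abs_le.2 ⟨le_of_lt hx.1, hx.2⟩
      have hhx : h x = 2 * |a| - 2 * |x| := by
        simp only [hhdef]
        rw [aux_abs_sum hxle]
      have hfx : f 0 / 2 ≤ f x := hlb x (le_trans hxle haδ)
      rw [hhx]
      have hnn : (0:ℝ) ≤ |a| - |x| := by linarith
      nlinarith [hfnn x, hf0.le]
  have htot : ∫ x in Set.Ioc (-|a|) |a|, f x * h x ≤ ∫ x, f x * h x :=
    setIntegral_le_integral hfhint
      (ae_of_all _ fun x => mul_nonneg (hfnn x) (hh_nonneg x))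
  have hcomp : ∫ x in Set.Ioc (-|a|) |a|, f 0 * (|a| - |x|) = f 0 * a ^ 2 := by
    rw [aux_tent (f 0) |a| (abs_nonneg a), sq_abs]
  have hfinal : f 0 * a ^ 2 ≤ 2 * ∫ x, g x ∂(P.map ξ) := by
    rw [hdouble, hdensity]
    linarith [hcomp ▸ hset, htot]
  rw [hE]
  linarith
end

section
/- Let Y_1, …, Y_n be i.i.d. real-valued random variables with partial sums S_j = Y_1 + ⋯ + Y_j, and suppose P(S_j = 0) = 0 for every 1 ≤ j ≤ n (e.g., the step distribution is continuous). Then P(max_{1 ≤ i ≤ n} S_i < 0) ≥ (1/n)·P(S_n < 0). -/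
open MeasureTheory ProbabilityTheory
open Fin.NatCast

/-- Cycle lemma: if the total sum over `range n` is negative, some cyclic rotation
has all partial sums strictly negative. -/
lemma stmt3_cycle_lemma (n : ℕ) (hn : 1 ≤ n) (a : ℕ → ℝ)
    (h : ∑ i ∈ Finset.range n, a i < 0) :
    ∃ k < n, ∀ m, 1 ≤ m → m ≤ n → ∑ i ∈ Finset.range m, a ((k + i) % n) < 0 := by
  set S : ℕ → ℝ := fun m => ∑ i ∈ Finset.range m, a i with hS
  have sub1 : ∀ k m : ℕ, k + m ≤ n →
      ∑ i ∈ Finset.range m, a ((k + i) % n) = S (k + m) - S k := by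
    intro k m hkm
    have h1 : ∑ i ∈ Finset.range m, a ((k + i) % n) = ∑ i ∈ Finset.range m, a (k + i) :=
      Finset.sum_congr rfl fun i hi => by
        rw [Nat.mod_eq_of_lt (by have := Finset.mem_range.mp hi; omega)]
    rw [h1, hS]
    simp only []
    rw [Finset.sum_range_add]
    ring
  -- pick last argmax
  set F := (Finset.range n).filter (fun i => ∀ l ∈ Finset.range n, S l ≤ S i) with hF
  have hFne : F.Nonempty := by
    obtain ⟨b, hb, hbm⟩ := Finset.exists_max_image (Finset.range n) S ⟨0, Finset.mem_range.mpr hn⟩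
    exact ⟨b, Finset.mem_filter.mpr ⟨hb, hbm⟩⟩
  set j := F.max' hFne with hj
  have hjF : j ∈ F := F.max'_mem hFne
  have hjn : j < n := Finset.mem_range.mp (Finset.mem_filter.mp hjF).1
  have hmax : ∀ l < n, S l ≤ S j := fun l hl =>
    (Finset.mem_filter.mp hjF).2 l (Finset.mem_range.mpr hl)
  have hlast : ∀ l, j < l → l < n → S l < S j := by
    intro l hjl hln
    rcases lt_or_eq_of_le (hmax l hln) with h' | h'
    · exact h'
    · exfalso
      have : l ∈ F := Finset.mem_filter.mpr ⟨Finset.mem_range.mpr hln,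
        fun l' hl' => h' ▸ hmax l' (Finset.mem_range.mp hl')⟩
      exact absurd (Finset.le_max' F l this) (by omega)
  have hS0 : S 0 = 0 := by simp [hS]
  have hSn : S n < 0 := h
  have hSj : 0 ≤ S j := hS0 ▸ hmax 0 hn
  refine ⟨j, hjn, fun m h1 h2 => ?_⟩
  by_cases hc : j + m ≤ n
  · rw [sub1 j m hc]
    have : S (j + m) < S j := by
      rcases eq_or_lt_of_le hc with h' | h'
      · rw [h']; linarith
      · exact hlast (j + m) (by omega) h'
    linarith
  · push_neg at hc
    have hd : (n - j) + (m - (n - j)) = m := by omega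
    set r := m - (n - j) with hr
    have hrj : r ≤ j := by omega
    calc ∑ i ∈ Finset.range m, a ((j + i) % n)
        = ∑ i ∈ Finset.range (n - j), a ((j + i) % n)
          + ∑ i ∈ Finset.range r, a ((j + ((n - j) + i)) % n) := by
          rw [← hd, Finset.sum_range_add]
      _ = (S n - S j) + S r := by
          rw [sub1 j (n - j) (by omega)]
          have e1 : j + (n - j) = n := by omega
          have e2 : ∑ i ∈ Finset.range r, a ((j + ((n - j) + i)) % n) = S r := by
            refine Finset.sum_congr rfl fun i hi => ?_
            have hi' := Finset.mem_range.mp hi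
            congr 1
            have he : j + ((n - j) + i) = n + i := by omega
            rw [he, Nat.add_mod_left, Nat.mod_eq_of_lt (by omega)]
          rw [e1, e2]
      _ < 0 := by have := hmax r (by omega); linarith

/-- Joint law of the first `n` coordinates of an i.i.d. family is the product measure. -/
lemma stmt3_map_eq_pi {Ω : Type*} [MeasurableSpace Ω] (P : Measure Ω) [IsProbabilityMeasure P]
    (Y : ℕ → Ω → ℝ) (hmeas : ∀ i, Measurable (Y i))
    (hindep : iIndepFun Y P)
    (hident : ∀ i, P.map (Y i) = P.map (Y 0)) (n : ℕ) :
    P.map (fun ω (i : Fin n) => Y i ω) = Measure.pi (fun _ : Fin n => P.map (Y 0)) := by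
  haveI : IsProbabilityMeasure (P.map (Y 0)) := Measure.isProbabilityMeasure_map (hmeas 0).aemeasurable
  refine (Measure.pi_eq fun s hs => ?_).symm
  set t : ℕ → Set ℝ := fun i => if h : i < n then s ⟨i, h⟩ else Set.univ with ht
  have htm : ∀ i, MeasurableSet (t i) := by
    intro i; rw [ht]; dsimp only; split
    · exact hs _
    · exact MeasurableSet.univ
  have hpre : (fun ω (i : Fin n) => Y i ω) ⁻¹' Set.pi Set.univ s
      = ⋂ i ∈ Finset.range n, Y i ⁻¹' t i := by
    ext ω
    simp only [Set.mem_preimage, Set.mem_pi, Set.mem_univ, forall_true_left,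
      Set.mem_iInter, Finset.mem_range]
    constructor
    · intro hx i hi
      simpa [ht, hi] using hx ⟨i, hi⟩
    · intro hx i
      have := hx i.1 i.2
      simpa [ht, i.2] using this
  rw [Measure.map_apply (measurable_pi_lambda (fun ω (i : Fin n) => Y i ω) fun i => hmeas i)
      (MeasurableSet.univ_pi hs),
    hpre, hindep.meas_biInter (fun i _ => ⟨t i, htm i, rfl⟩)]
  have : ∀ i ∈ Finset.range n, P (Y i ⁻¹' t i) = (P.map (Y 0)) (t i) := by
    intro i _
    rw [← hident i, Measure.map_apply (hmeas i) (htm i)]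
  rw [Finset.prod_congr rfl this]
  rw [← Fin.prod_univ_eq_prod_range (fun i => (P.map (Y 0)) (t i)) n]
  refine Finset.prod_congr rfl fun i _ => ?_
  congr 1
  simp [ht, i.2]

/-- Rotation invariance of the product measure for the rotated-walk events. -/
lemma stmt3_rot_inv (n : ℕ) [NeZero n] (ν : Measure ℝ) [IsProbabilityMeasure ν] (k : ℕ)
    (B : ℕ → Set (Fin n → ℝ))
    (hB : ∀ k, B k = {x : Fin n → ℝ | ∀ m, 1 ≤ m → m ≤ n →
      ∑ i ∈ Finset.range m, x ((k : Fin n) + (i : Fin n)) < 0})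
    (hBm : ∀ k, MeasurableSet (B k)) :
    Measure.pi (fun _ : Fin n => ν) (B k) = Measure.pi (fun _ : Fin n => ν) (B 0) := by
  set e : Fin n ≃ Fin n := Equiv.addLeft (k : Fin n) with he
  have hmp := MeasureTheory.measurePreserving_piCongrLeft (fun _ : Fin n => ν) e.symm
  have hfx : ∀ (x : Fin n → ℝ) (j : Fin n),
      (MeasurableEquiv.piCongrLeft (fun _ : Fin n => ℝ) e.symm) x j = x (e j) := by
    intro x j
    have := MeasurableEquiv.piCongrLeft_apply_apply (β := fun _ : Fin n => ℝ) e.symm x (e j)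
    simpa using this
  have hBk : B k = (MeasurableEquiv.piCongrLeft (fun _ : Fin n => ℝ) e.symm) ⁻¹' (B 0) := by
    ext x
    simp only [Set.mem_preimage, hB, Set.mem_setOf_eq]
    refine forall_congr' fun m => imp_congr_right fun h1 => imp_congr_right fun h2 => ?_
    have : ∀ i : ℕ, (MeasurableEquiv.piCongrLeft (fun _ : Fin n => ℝ) e.symm) x
        ((((0:ℕ)) : Fin n) + (i : Fin n)) = x ((k : Fin n) + (i : Fin n)) := by
      intro i
      rw [hfx]
      congr 1
      simp [he]
    rw [Finset.sum_congr rfl fun i _ => this i]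
  rw [hBk, hmp.measure_preimage (hBm 0).nullMeasurableSet]

/-- For an i.i.d. random walk `S_j = Y_1 + ⋯ + Y_j` with `P(S_j = 0) = 0` for `1 ≤ j ≤ n`,
the probability that the walk stays strictly negative up to time `n` is at least
`(1/n)·P(S_n < 0)`. -/
theorem stmt3 {Ω : Type*} [MeasurableSpace Ω] (P : Measure Ω) [IsProbabilityMeasure P]
    (Y : ℕ → Ω → ℝ) (hmeas : ∀ i, Measurable (Y i))
    (hindep : iIndepFun Y P)
    (hident : ∀ i, P.map (Y i) = P.map (Y 0))
    (n : ℕ) (hn : 1 ≤ n)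
    (hzero : ∀ j, 1 ≤ j → j ≤ n → P {ω | ∑ i ∈ Finset.range j, Y i ω = 0} = 0) :
    P {ω | ∑ i ∈ Finset.range n, Y i ω < 0} / n ≤
      P {ω | ∀ j, 1 ≤ j → j ≤ n → ∑ i ∈ Finset.range j, Y i ω < 0} := by
  haveI : NeZero n := ⟨by omega⟩
  haveI : IsProbabilityMeasure (P.map (Y 0)) := Measure.isProbabilityMeasure_map (hmeas 0).aemeasurable
  set ν := P.map (Y 0) with hν
  set V : Ω → (Fin n → ℝ) := fun ω (i : Fin n) => Y i ω with hV
  have hVmeas : Measurable V := measurable_pi_lambda _ fun i => hmeas i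
  set B : ℕ → Set (Fin n → ℝ) := fun k => {x : Fin n → ℝ | ∀ m, 1 ≤ m → m ≤ n →
      ∑ i ∈ Finset.range m, x ((k : Fin n) + (i : Fin n)) < 0} with hB
  have hBm : ∀ k, MeasurableSet (B k) := by
    intro k
    have : B k = ⋂ m, ⋂ (_ : 1 ≤ m), ⋂ (_ : m ≤ n),
        {x : Fin n → ℝ | ∑ i ∈ Finset.range m, x ((k : Fin n) + (i : Fin n)) < 0} := by
      ext x; simp [hB]
    rw [this]
    refine MeasurableSet.iInter fun m => MeasurableSet.iInter fun _ =>
      MeasurableSet.iInter fun _ => ?_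
    exact measurableSet_lt (Finset.measurable_sum _ fun i _ => measurable_pi_apply ((k : Fin n) + ((i : ℕ) : Fin n)))
      measurable_const
  set A : ℕ → Set Ω := fun k => {ω | ∀ m, 1 ≤ m → m ≤ n →
      ∑ i ∈ Finset.range m, Y ((k + i) % n) ω < 0} with hA
  -- A k is the preimage of B k under V
  have hAB : ∀ k, A k = V ⁻¹' (B k) := by
    intro k
    ext ω
    simp only [hA, hB, Set.mem_preimage, Set.mem_setOf_eq, hV]
    refine forall_congr' fun m => imp_congr_right fun h1 => imp_congr_right fun h2 => ?_
    have : ∀ i : ℕ, Y (((k : Fin n) + (i : Fin n)) : Fin n).val ω = Y ((k + i) % n) ω := by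
      intro i
      congr 1
      rw [Fin.val_add, Fin.val_natCast, Fin.val_natCast]
      conv_rhs => rw [Nat.add_mod]
    rw [Finset.sum_congr rfl fun i _ => (this i).symm]
  -- each A k has the same probability
  have hPA : ∀ k, P (A k) = P (A 0) := by
    intro k
    rw [hAB k, hAB 0,
      ← Measure.map_apply hVmeas (hBm k), ← Measure.map_apply hVmeas (hBm 0),
      stmt3_map_eq_pi P Y hmeas hindep hident n]
    exact stmt3_rot_inv n ν k B (fun k => rfl) hBm
  -- cycle lemma: union bound
  have hsub : {ω | ∑ i ∈ Finset.range n, Y i ω < 0} ⊆ ⋃ k ∈ Finset.range n, A k := by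
    intro ω hω
    obtain ⟨k, hk, hkprop⟩ := stmt3_cycle_lemma n hn (fun i => Y i ω) hω
    exact Set.mem_biUnion (Finset.mem_range.mpr hk) hkprop
  have hle : P {ω | ∑ i ∈ Finset.range n, Y i ω < 0} ≤ (n : ENNReal) * P (A 0) := by
    calc P {ω | ∑ i ∈ Finset.range n, Y i ω < 0}
        ≤ P (⋃ k ∈ Finset.range n, A k) := measure_mono hsub
      _ ≤ ∑ k ∈ Finset.range n, P (A k) := measure_biUnion_finset_le _ _
      _ = ∑ _k ∈ Finset.range n, P (A 0) := Finset.sum_congr rfl fun k _ => hPA k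
      _ = (n : ENNReal) * P (A 0) := by
          rw [Finset.sum_const, Finset.card_range, nsmul_eq_mul]
  -- A 0 is the target event
  have hA0 : A 0 = {ω | ∀ j, 1 ≤ j → j ≤ n → ∑ i ∈ Finset.range j, Y i ω < 0} := by
    ext ω
    simp only [hA, Set.mem_setOf_eq]
    refine forall_congr' fun m => imp_congr_right fun h1 => imp_congr_right fun h2 => ?_
    rw [Finset.sum_congr rfl fun i hi => by
      rw [Nat.zero_add, Nat.mod_eq_of_lt (lt_of_lt_of_le (Finset.mem_range.mp hi) h2)]]
  rw [← hA0]
  rw [ENNReal.div_le_iff (by exact_mod_cast (by omega : n ≠ 0)) (ENNReal.natCast_ne_top n)]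
  calc P {ω | ∑ i ∈ Finset.range n, Y i ω < 0} ≤ (n : ENNReal) * P (A 0) := hle
    _ = P (A 0) * n := mul_comm _ _
end

section
/- Let (U_{i,j})_{1 ≤ i ≤ m, 1 ≤ j ≤ n} be i.i.d. random variables uniformly distributed on (0,1), and define T_{m,n} = max_{1 ≤ i ≤ m} ( n · min_{1 ≤ j ≤ n} U_{i,j} ). If n = n(m) is any sequence with n(m) ≥ 2m for all m, then liminf_{m → ∞} E[T_{m,n(m)}]/log m ≥ 1. -/
open MeasureTheory ProbabilityTheory Filter

open Set


section Block
variable {Ω : Type*} [MeasurableSpace Ω] (P : Measure Ω) [IsProbabilityMeasure P]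
  {m n : ℕ} (U : Fin m × Fin n → Ω → ℝ)

lemma single_prob (hmeas : ∀ p, Measurable (U p))
    (hunif : ∀ p, P.map (U p) = volume.restrict (Set.Ioo (0:ℝ) 1))
    {s : ℝ} (hs : 0 ≤ s) (p : Fin m × Fin n) :
    P ((U p) ⁻¹' Ici s) = ENNReal.ofReal (1 - s) := by
  rw [← Measure.map_apply (hmeas p) measurableSet_Ici, hunif p,
    Measure.restrict_apply measurableSet_Ici]
  refine le_antisymm ?_ ?_
  · refine le_trans (measure_mono ?_) (le_of_eq (Real.volume_Ico (a := s) (b := 1)))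
    rintro x ⟨hx1, hx2, hx3⟩
    exact ⟨hx1, hx3⟩
  · refine le_trans (le_of_eq (Real.volume_Ioo (a := s) (b := 1)).symm) (measure_mono ?_)
    rintro x ⟨hx1, hx2⟩
    exact ⟨hx1.le, lt_of_le_of_lt hs hx1, hx2⟩

lemma block_prob (hmeas : ∀ p, Measurable (U p))
    (hindep : iIndepFun U P)
    (hunif : ∀ p, P.map (U p) = volume.restrict (Set.Ioo (0:ℝ) 1))
    {s : ℝ} (hs : 0 ≤ s) (S : Finset (Fin m × Fin n)) :
    P (⋂ p ∈ S, (U p) ⁻¹' Ici s) = ENNReal.ofReal (1 - s) ^ S.card := by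
  rw [hindep.meas_biInter (fun p _ => ⟨Ici s, measurableSet_Ici, rfl⟩)]
  rw [Finset.prod_congr rfl (fun p _ => single_prob P U hmeas hunif hs p), Finset.prod_const]

end Block

section Key
variable {Ω : Type*} [MeasurableSpace Ω] {P : Measure Ω} [IsProbabilityMeasure P]
  {m n : ℕ} {U : Fin m × Fin n → Ω → ℝ}

lemma block_eq_singleton {s : ℝ} (i : Fin m) :
    (⋂ j : Fin n, (U (i, j)) ⁻¹' Ici s)
      = ⋂ p ∈ (({i} : Finset (Fin m)) ×ˢ (Finset.univ : Finset (Fin n))), (U p) ⁻¹' Ici s := by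
  ext ω
  simp only [Set.mem_iInter, Finset.mem_product, Finset.mem_singleton, Finset.mem_univ,
    and_true]
  constructor
  · rintro h ⟨i', j⟩ (rfl : i' = i); exact h j
  · intro h j; exact h (i, j) rfl

lemma block_eq_pair {s : ℝ} {i k : Fin m} (hik : i ≠ k) :
    ((⋂ j : Fin n, (U (i, j)) ⁻¹' Ici s) ∩ ⋂ j : Fin n, (U (k, j)) ⁻¹' Ici s)
      = ⋂ p ∈ (({i, k} : Finset (Fin m)) ×ˢ (Finset.univ : Finset (Fin n))), (U p) ⁻¹' Ici s := by
  ext ω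
  simp only [Set.mem_inter_iff, Set.mem_iInter, Finset.mem_product, Finset.mem_insert,
    Finset.mem_singleton, Finset.mem_univ, and_true]
  constructor
  · rintro ⟨h1, h2⟩ ⟨i', j⟩ (rfl | rfl)
    · exact h1 j
    · exact h2 j
  · exact fun h => ⟨fun j => h (i, j) (Or.inl rfl), fun j => h (k, j) (Or.inr rfl)⟩

lemma key_lower (hm : 1 ≤ m) (hn : 1 ≤ n)
    (hmeas : ∀ p, Measurable (U p))
    (hindep : iIndepFun U P)
    (hunif : ∀ p, P.map (U p) = volume.restrict (Set.Ioo (0:ℝ) 1))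
    {s : ℝ} (hs0 : 0 ≤ s) (hs1 : s < 1) :
    (n : ℝ) * s * (1 - 1 / (m * (1 - s) ^ n))
      ≤ ∫ ω, (⨆ i : Fin m, (n : ℝ) * ⨅ j : Fin n, U (i, j) ω) ∂P := by
  haveI : Nonempty (Fin m) := Fin.pos_iff_nonempty.1 hm
  haveI : Nonempty (Fin n) := Fin.pos_iff_nonempty.1 hn
  set q : ℝ := (1 - s) ^ n with hq_def
  have hq_pos : 0 < q := pow_pos (by linarith) n
  have hs1' : (0:ℝ) ≤ 1 - s := by linarith
  -- the events
  set A : Fin m → Set Ω := fun i => ⋂ j : Fin n, (U (i, j)) ⁻¹' Ici s with hA_def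
  have hAmeas : ∀ i, MeasurableSet (A i) :=
    fun i => MeasurableSet.iInter fun j => (hmeas (i, j)) measurableSet_Ici
  have hPA : ∀ i, (P (A i)).toReal = q := by
    intro i
    simp only [hA_def]
    rw [block_eq_singleton (U := U) i, block_prob P U hmeas hindep hunif hs0,
      Finset.card_product, Finset.card_singleton, Finset.card_univ, Fintype.card_fin,
      one_mul, ← ENNReal.ofReal_pow hs1', ENNReal.toReal_ofReal (pow_nonneg hs1' n)]
  have hPApair : ∀ i k, i ≠ k → (P (A i ∩ A k)).toReal = q ^ 2 := by
    intro i k hik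
    simp only [hA_def]
    rw [block_eq_pair (U := U) hik, block_prob P U hmeas hindep hunif hs0,
      Finset.card_product, Finset.card_insert_of_notMem (by simpa using hik),
      Finset.card_singleton, Finset.card_univ, Fintype.card_fin,
      ← ENNReal.ofReal_pow hs1', ENNReal.toReal_ofReal (pow_nonneg hs1' _)]
    rw [hq_def, ← pow_mul]
    congr 1
    omega
  -- indicators
  set X : Fin m → Ω → ℝ := fun i => (A i).indicator (fun _ => (1:ℝ)) with hX_def
  have hXint : ∀ i, Integrable (X i) P := fun i => (integrable_const 1).indicator (hAmeas i)
  have hXmul : ∀ i k, (fun ω => X i ω * X k ω) = (A i ∩ A k).indicator (fun _ => (1:ℝ)) := by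
    intro i k
    funext ω
    simp only [hX_def]
    by_cases h1 : ω ∈ A i <;> by_cases h2 : ω ∈ A k <;>
      simp [Set.indicator_of_mem, Set.indicator_of_notMem, h1, h2, Set.mem_inter_iff]
  have hXmulint : ∀ i k, Integrable (fun ω => X i ω * X k ω) P := by
    intro i k
    rw [hXmul]
    exact (integrable_const 1).indicator ((hAmeas i).inter (hAmeas k))
  have hXmulval : ∀ i k, ∫ ω, X i ω * X k ω ∂P = (P (A i ∩ A k)).toReal := by
    intro i k
    rw [hXmul, integral_indicator_const (1:ℝ) ((hAmeas i).inter (hAmeas k)), smul_eq_mul,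
      mul_one, measureReal_def]
  set Z : Ω → ℝ := fun ω => ∑ i : Fin m, X i ω with hZ_def
  have hZint : Integrable Z P := integrable_finset_sum _ fun i _ => hXint i
  have hEZ : ∫ ω, Z ω ∂P = m * q := by
    rw [hZ_def]
    rw [integral_finset_sum _ fun i _ => hXint i]
    have : ∀ i : Fin m, ∫ ω, X i ω ∂P = q := by
      intro i
      rw [hX_def]
      simp only
      rw [integral_indicator_const (1:ℝ) (hAmeas i), smul_eq_mul, mul_one, measureReal_def, hPA]
    rw [Finset.sum_congr rfl fun i _ => this i, Finset.sum_const, Finset.card_univ,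
      Fintype.card_fin, nsmul_eq_mul]
  have hZsq : (fun ω => Z ω ^ 2) = fun ω => ∑ i : Fin m, ∑ k : Fin m, X i ω * X k ω := by
    funext ω
    rw [hZ_def]
    simp only
    rw [sq, Finset.sum_mul_sum]
  have hZsqint : Integrable (fun ω => Z ω ^ 2) P := by
    rw [hZsq]
    exact integrable_finset_sum _ fun i _ => integrable_finset_sum _ fun k _ => hXmulint i k
  have hEZsq : ∫ ω, Z ω ^ 2 ∂P = m * q + (m * m - m) * q ^ 2 := by
    rw [hZsq, integral_finset_sum _ fun i _ => integrable_finset_sum _ fun k _ => hXmulint i k]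
    have hterm : ∀ i : Fin m, ∑ k : Fin m, ∫ ω, X i ω * X k ω ∂P
        = m * q ^ 2 + (q - q ^ 2) := by
      intro i
      have : ∀ k : Fin m, ∫ ω, X i ω * X k ω ∂P
          = q ^ 2 + (if k = i then q - q ^ 2 else 0) := by
        intro k
        rw [hXmulval]
        by_cases hik : k = i
        · subst hik; rw [if_pos rfl, Set.inter_self, hPA]; ring
        · rw [if_neg hik, hPApair i k (Ne.symm hik)]; ring
      rw [Finset.sum_congr rfl fun k _ => this k, Finset.sum_add_distrib, Finset.sum_const,
        Finset.sum_ite_eq' Finset.univ i _, if_pos (Finset.mem_univ i), Finset.card_univ,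
        Fintype.card_fin, nsmul_eq_mul]
    rw [Finset.sum_congr rfl fun i _ =>
      integral_finset_sum Finset.univ fun k _ => hXmulint i k]
    rw [Finset.sum_congr rfl fun i _ => hterm i]
    rw [Finset.sum_const, Finset.card_univ, Fintype.card_fin, nsmul_eq_mul]
    ring
  -- Chebyshev-type bound
  set c : ℝ := m * q with hc_def
  have hc_pos : 0 < c := by
    have : (0:ℝ) < m := by exact_mod_cast hm
    positivity
  set C : Set Ω := ⋂ i : Fin m, (A i)ᶜ with hC_def
  have hCmeas : MeasurableSet C := MeasurableSet.iInter fun i => (hAmeas i).compl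
  have hdev : (fun ω => (Z ω - c) ^ 2) = fun ω => Z ω ^ 2 - (2 * c) * Z ω + c ^ 2 := by
    funext ω; ring
  have hdevint : Integrable (fun ω => (Z ω - c) ^ 2) P := by
    rw [hdev]
    exact (hZsqint.sub (hZint.const_mul (2 * c))).add (integrable_const _)
  have hint1 : Integrable (fun ω => 2 * c * Z ω) P := by
    exact hZint.const_mul (2 * c)
  have hint2 : Integrable (fun ω => Z ω ^ 2 - 2 * c * Z ω) P := by
    exact hZsqint.sub hint1
  have hEdev : ∫ ω, (Z ω - c) ^ 2 ∂P = m * q - m * q ^ 2 := by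
    rw [hdev, integral_add hint2 (integrable_const _),
      integral_sub hZsqint hint1, integral_const_mul, hEZsq, hEZ,
      integral_const, probReal_univ]
    simp only [ one_smul, hc_def]
    ring
  have hpoint : (fun ω => C.indicator (fun _ => c ^ 2) ω) ≤ fun ω => (Z ω - c) ^ 2 := by
    intro ω
    show C.indicator (fun _ => c ^ 2) ω ≤ (Z ω - c) ^ 2
    by_cases hw : ω ∈ C
    · rw [Set.indicator_of_mem hw]
      have hZ0 : Z ω = 0 := by
        rw [hZ_def]
        refine Finset.sum_eq_zero fun i _ => ?_
        have : ω ∉ A i := by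
          have := Set.mem_iInter.1 hw i; exact this
        simp [hX_def, Set.indicator_of_notMem this]
      rw [hZ0]
      ring_nf
      exact le_of_eq rfl
    · rw [Set.indicator_of_notMem hw]
      positivity
  have hPC : (P C).toReal ≤ 1 / c := by
    have h1 : (P C).toReal * c ^ 2 ≤ m * q - m * q ^ 2 := by
      have := integral_mono ((integrable_const (c ^ 2)).indicator hCmeas) hdevint hpoint
      rwa [integral_indicator_const (c ^ 2) hCmeas, smul_eq_mul, measureReal_def, hEdev] at this
    have h2 : m * q - m * q ^ 2 ≤ c := by
      have hq1 : q ≤ 1 := pow_le_one₀ hs1' (by linarith)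
      have hm0 : (0:ℝ) ≤ m := Nat.cast_nonneg m
      rw [hc_def]
      nlinarith
    rw [div_eq_inv_mul, ← mul_le_mul_iff_of_pos_right (by positivity : (0:ℝ) < c ^ 2), inv_mul_eq_div]
    calc (P C).toReal * c ^ 2 ≤ c := h1.trans h2
    _ = 1 / c * c ^ 2 := by field_simp
  have hPCc : 1 - 1 / c ≤ (P Cᶜ).toReal := by
    have hadd : (P C).toReal + (P Cᶜ).toReal = 1 := by
      rw [← ENNReal.toReal_add (measure_ne_top _ _) (measure_ne_top _ _),
        measure_add_measure_compl hCmeas, measure_univ, ENNReal.toReal_one]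
    linarith
  -- a.e. goodness
  have hgood : ∀ᵐ ω ∂P, ∀ p : Fin m × Fin n, U p ω ∈ Ioo (0:ℝ) 1 := by
    rw [ae_all_iff]
    intro p
    have h1 : P ((U p) ⁻¹' Ioo (0:ℝ) 1) = 1 := by
      rw [← Measure.map_apply (hmeas p) measurableSet_Ioo, hunif p,
        Measure.restrict_apply measurableSet_Ioo, Set.inter_self, Real.volume_Ioo]
      norm_num
    have h2 : P ((U p) ⁻¹' Ioo (0:ℝ) 1)ᶜ = 0 :=
      (prob_compl_eq_zero_iff ((hmeas p) measurableSet_Ioo)).2 h1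
    exact (MeasureTheory.ae_iff).2 h2
  -- the target function
  set T : Ω → ℝ := fun ω => ⨆ i : Fin m, (n : ℝ) * ⨅ j : Fin n, U (i, j) ω with hT_def
  have hTmeas : Measurable T :=
    Measurable.iSup fun i => (Measurable.iInf fun j => hmeas (i, j)).const_mul (n:ℝ)
  have hn0 : (0:ℝ) ≤ n := Nat.cast_nonneg n
  have hT0 : ∀ ω, (∀ p : Fin m × Fin n, U p ω ∈ Ioo (0:ℝ) 1) → 0 ≤ T ω ∧ T ω ≤ n := by
    intro ω hω
    have hinf : ∀ i : Fin m, 0 ≤ (⨅ j : Fin n, U (i, j) ω) ∧ (⨅ j : Fin n, U (i, j) ω) ≤ 1 := by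
      intro i
      constructor
      · exact le_ciInf fun j => (hω (i, j)).1.le
      · exact (ciInf_le (Finite.bddBelow_range _) (Classical.arbitrary (Fin n))).trans
          (hω (i, Classical.arbitrary (Fin n))).2.le
    constructor
    · refine le_ciSup_of_le (Finite.bddAbove_range _) (Classical.arbitrary (Fin m)) ?_
      exact mul_nonneg hn0 (hinf _).1
    · exact ciSup_le fun i => mul_le_of_le_one_right hn0 (hinf i).2
  have hTint : Integrable T P := by
    refine ⟨hTmeas.aestronglyMeasurable, HasFiniteIntegral.of_bounded (C := (n:ℝ)) ?_⟩
    filter_upwards [hgood] with ω hω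
    rw [Real.norm_eq_abs, abs_le]
    have := hT0 ω hω
    constructor <;> [linarith [this.1]; exact this.2]
  have hlow : (fun ω => (Cᶜ).indicator (fun _ => (n:ℝ) * s) ω) ≤ᵐ[P] T := by
    filter_upwards [hgood] with ω hω
    by_cases hc : ω ∈ Cᶜ
    · rw [Set.indicator_of_mem hc]
      obtain ⟨i, hi⟩ : ∃ i : Fin m, ω ∈ A i := by
        by_contra h
        push_neg at h
        exact hc (Set.mem_iInter.2 fun i => h i)
      have h1 : (n:ℝ) * s ≤ (n:ℝ) * ⨅ j : Fin n, U (i, j) ω := by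
        refine mul_le_mul_of_nonneg_left ?_ hn0
        exact le_ciInf fun j => Set.mem_iInter.1 hi j
      have h2 : (n:ℝ) * ⨅ j : Fin n, U (i, j) ω ≤ T ω :=
        le_ciSup (f := fun i : Fin m => (n:ℝ) * ⨅ j : Fin n, U (i, j) ω)
          (Finite.bddAbove_range _) i
      exact h1.trans h2
    · rw [Set.indicator_of_notMem hc]
      exact (hT0 ω hω).1
  have hfinal := integral_mono_ae ((integrable_const ((n:ℝ) * s)).indicator hCmeas.compl)
    hTint hlow
  rw [integral_indicator_const ((n:ℝ) * s) hCmeas.compl, smul_eq_mul, measureReal_def] at hfinal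
  calc (n:ℝ) * s * (1 - 1 / (m * (1 - s) ^ n)) = (1 - 1/c) * ((n:ℝ) * s) := by
        rw [hc_def, hq_def]; ring
  _ ≤ (P Cᶜ).toReal * ((n:ℝ) * s) :=
      mul_le_mul_of_nonneg_right hPCc (mul_nonneg hn0 hs0)
  _ ≤ ∫ ω, T ω ∂P := hfinal
  _ = _ := rfl

lemma key_upper (hm : 1 ≤ m) (hn : 1 ≤ n)
    (hmeas : ∀ p, Measurable (U p))
    (hindep : iIndepFun U P)
    (hunif : ∀ p, P.map (U p) = volume.restrict (Set.Ioo (0:ℝ) 1))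
    {a : ℝ} (ha : 0 ≤ a) :
    ∫ ω, (⨆ i : Fin m, (n : ℝ) * ⨅ j : Fin n, U (i, j) ω) ∂P
      ≤ a + m * (2 * Real.exp (-a)) := by
  haveI : Nonempty (Fin m) := Fin.pos_iff_nonempty.1 hm
  haveI : Nonempty (Fin n) := Fin.pos_iff_nonempty.1 hn
  have hn0 : (0:ℝ) < n := by exact_mod_cast hn
  -- the events
  set B : ℕ → Fin m → Set Ω := fun k i => ⋂ j : Fin n, (U (i, j)) ⁻¹' Ici ((a + k) / n)
    with hB_def
  have hsk : ∀ k : ℕ, (0:ℝ) ≤ (a + k) / n := fun k => by positivity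
  have hBmeas : ∀ k i, MeasurableSet (B k i) :=
    fun k i => MeasurableSet.iInter fun j => (hmeas (i, j)) measurableSet_Ici
  have hPB : ∀ k i, (P (B k i)).toReal ≤ Real.exp (-(a + k)) := by
    intro k i
    simp only [hB_def]
    rw [block_eq_singleton (U := U) i, block_prob P U hmeas hindep hunif (hsk k),
      Finset.card_product, Finset.card_singleton, Finset.card_univ, Fintype.card_fin, one_mul,
      ENNReal.toReal_pow, ENNReal.toReal_ofReal']
    have h1 : max (1 - (a + k) / n) 0 ≤ Real.exp (-((a + k) / n)) := by
      refine max_le ?_ (Real.exp_pos _).le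
      have := Real.add_one_le_exp (-((a + k) / n))
      linarith
    calc max (1 - (a + k) / n) 0 ^ n ≤ Real.exp (-((a + k) / n)) ^ n :=
          pow_le_pow_left₀ (le_max_right _ _) h1 n
    _ = Real.exp (-(a + k)) := by
        rw [← Real.exp_nat_mul]
        congr 1
        field_simp
  -- a.e. goodness
  have hgood : ∀ᵐ ω ∂P, ∀ p : Fin m × Fin n, U p ω ∈ Ioo (0:ℝ) 1 := by
    rw [ae_all_iff]
    intro p
    have h1 : P ((U p) ⁻¹' Ioo (0:ℝ) 1) = 1 := by
      rw [← Measure.map_apply (hmeas p) measurableSet_Ioo, hunif p,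
        Measure.restrict_apply measurableSet_Ioo, Set.inter_self, Real.volume_Ioo]
      norm_num
    exact (MeasureTheory.ae_iff).2
      ((prob_compl_eq_zero_iff ((hmeas p) measurableSet_Ioo)).2 h1)
  set T : Ω → ℝ := fun ω => ⨆ i : Fin m, (n : ℝ) * ⨅ j : Fin n, U (i, j) ω with hT_def
  have hTmeas : Measurable T :=
    Measurable.iSup fun i => (Measurable.iInf fun j => hmeas (i, j)).const_mul (n:ℝ)
  have hTbd : ∀ ω, (∀ p : Fin m × Fin n, U p ω ∈ Ioo (0:ℝ) 1) →
      (∀ i : Fin m, 0 ≤ (n:ℝ) * ⨅ j : Fin n, U (i, j) ω ∧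
        (n:ℝ) * (⨅ j : Fin n, U (i, j) ω) ≤ n) := by
    intro ω hω i
    constructor
    · exact mul_nonneg hn0.le (le_ciInf fun j => (hω (i, j)).1.le)
    · refine mul_le_of_le_one_right hn0.le ?_
      exact (ciInf_le (Finite.bddBelow_range _) (Classical.arbitrary (Fin n))).trans
        (hω (i, Classical.arbitrary (Fin n))).2.le
  have hTint : Integrable T P := by
    refine ⟨hTmeas.aestronglyMeasurable, HasFiniteIntegral.of_bounded (C := (n:ℝ)) ?_⟩
    filter_upwards [hgood] with ω hω
    rw [Real.norm_eq_abs, abs_le]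
    constructor
    · have h0 : 0 ≤ T ω := le_ciSup_of_le (Finite.bddAbove_range _)
        (Classical.arbitrary (Fin m)) (hTbd ω hω (Classical.arbitrary (Fin m))).1
      linarith
    · exact ciSup_le fun i => (hTbd ω hω i).2
  -- the dominating function
  set G : Ω → ℝ := fun ω => a + ∑ i : Fin m, ∑ k ∈ Finset.range (n + 1),
    (B k i).indicator (fun _ => (1:ℝ)) ω with hG_def
  have hGint : Integrable G P := by
    refine (integrable_const a).add ?_
    exact integrable_finset_sum _ fun i _ => integrable_finset_sum _ fun k _ =>
      (integrable_const 1).indicator (hBmeas k i)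
  have hTleG : T ≤ᵐ[P] G := by
    filter_upwards [hgood] with ω hω
    have hsum_nonneg : ∀ i : Fin m,
        0 ≤ ∑ k ∈ Finset.range (n + 1), (B k i).indicator (fun _ => (1:ℝ)) ω :=
      fun i => Finset.sum_nonneg fun k _ => Set.indicator_nonneg (fun _ _ => zero_le_one) ω
    refine ciSup_le fun i => ?_
    set x : ℝ := (n:ℝ) * ⨅ j : Fin n, U (i, j) ω with hx_def
    have hxn : x ≤ n := (hTbd ω hω i).2
    have hkey : x - a ≤ ∑ k ∈ Finset.range (n + 1), (B k i).indicator (fun _ => (1:ℝ)) ω := by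
      by_cases hxa : x < a
      · linarith [hsum_nonneg i]
      · push_neg at hxa
        set j : ℕ := ⌊x - a⌋₊ with hj_def
        have hxa0 : 0 ≤ x - a := by linarith
        have hjn : j + 1 ≤ n + 1 := by
          have : (j:ℝ) ≤ n := le_trans (Nat.floor_le hxa0) (by linarith)
          have : j ≤ n := by exact_mod_cast this
          omega
        have hmem : ∀ k ∈ Finset.range (j + 1), ω ∈ B k i := by
          intro k hk
          have hkj : (k:ℝ) ≤ j := by
            exact_mod_cast Nat.lt_succ_iff.1 (Finset.mem_range.1 hk)
          have hxk : a + k ≤ x := by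
            have := Nat.floor_le hxa0
            linarith
          have hinf : (a + k) / n ≤ ⨅ j' : Fin n, U (i, j') ω := by
            rw [div_le_iff₀ hn0]
            rw [hx_def] at hxk
            linarith [hxk, mul_comm (n:ℝ) (⨅ j' : Fin n, U (i, j') ω)]
          exact Set.mem_iInter.2 fun j' =>
            le_trans hinf (ciInf_le (Finite.bddBelow_range _) j')
        have hsub : ∑ k ∈ Finset.range (j + 1), (1:ℝ)
            ≤ ∑ k ∈ Finset.range (n + 1), (B k i).indicator (fun _ => (1:ℝ)) ω := by
          refine le_trans (le_of_eq ?_)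
            (Finset.sum_le_sum_of_subset_of_nonneg
              (Finset.range_subset_range.2 hjn)
              (fun k _ _ => Set.indicator_nonneg (fun _ _ => zero_le_one) ω))
          exact Finset.sum_congr rfl fun k hk => by
            rw [Set.indicator_of_mem (hmem k hk)]
        have hlt : x - a < j + 1 := Nat.lt_floor_add_one _
        calc x - a ≤ (j:ℝ) + 1 := hlt.le
        _ = ∑ k ∈ Finset.range (j + 1), (1:ℝ) := by
            rw [Finset.sum_const, Finset.card_range, nsmul_eq_mul, mul_one]
            push_cast; ring
        _ ≤ _ := hsub
    have : 0 ≤ ∑ i' ∈ (Finset.univ : Finset (Fin m)).erase i,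
        ∑ k ∈ Finset.range (n + 1), (B k i').indicator (fun _ => (1:ℝ)) ω :=
      Finset.sum_nonneg fun i' _ => hsum_nonneg i'
    have hsplit : ∑ i' : Fin m, ∑ k ∈ Finset.range (n + 1),
        (B k i').indicator (fun _ => (1:ℝ)) ω
        = (∑ k ∈ Finset.range (n + 1), (B k i).indicator (fun _ => (1:ℝ)) ω)
          + ∑ i' ∈ (Finset.univ : Finset (Fin m)).erase i,
            ∑ k ∈ Finset.range (n + 1), (B k i').indicator (fun _ => (1:ℝ)) ω :=
      (Finset.add_sum_erase _ _ (Finset.mem_univ i)).symm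
    show x ≤ a + _
    rw [hsplit]
    linarith
  have hEG : ∫ ω, G ω ∂P ≤ a + m * (2 * Real.exp (-a)) := by
    rw [hG_def]
    rw [integral_add (integrable_const a) (integrable_finset_sum _ fun i _ =>
      integrable_finset_sum _ fun k _ => (integrable_const 1).indicator (hBmeas k i)),
      integral_const, probReal_univ, one_smul]
    refine add_le_add_right ?_ a
    rw [integral_finset_sum _ fun i _ => integrable_finset_sum _ fun k _ =>
      (integrable_const 1).indicator (hBmeas k i)]
    have hone : ∀ i : Fin m, ∫ ω, ∑ k ∈ Finset.range (n + 1),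
        (B k i).indicator (fun _ => (1:ℝ)) ω ∂P ≤ 2 * Real.exp (-a) := by
      intro i
      rw [integral_finset_sum _ fun k _ => (integrable_const 1).indicator (hBmeas k i)]
      have h1 : ∀ k ∈ Finset.range (n + 1),
          ∫ ω, (B k i).indicator (fun _ => (1:ℝ)) ω ∂P ≤ Real.exp (-a) * (1/2) ^ k := by
        intro k _
        rw [integral_indicator_const (1:ℝ) (hBmeas k i), smul_eq_mul, mul_one, measureReal_def]
        refine le_trans (hPB k i) ?_
        rw [neg_add, Real.exp_add]
        refine mul_le_mul_of_nonneg_left ?_ (Real.exp_pos _).le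
        have h2 : Real.exp (-(k:ℝ)) = Real.exp (-1) ^ k := by
          rw [← Real.exp_nat_mul]
          congr 1
          ring
        rw [h2]
        refine pow_le_pow_left₀ (Real.exp_pos _).le ?_ k
        have h3 := Real.add_one_le_exp (1:ℝ)
        rw [Real.exp_neg]
        rw [div_eq_inv_mul, mul_one]
        exact inv_anti₀ (by norm_num) (by linarith)
      calc ∑ k ∈ Finset.range (n + 1), ∫ ω, (B k i).indicator (fun _ => (1:ℝ)) ω ∂P
          ≤ ∑ k ∈ Finset.range (n + 1), Real.exp (-a) * (1/2) ^ k := Finset.sum_le_sum h1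
      _ = Real.exp (-a) * ∑ k ∈ Finset.range (n + 1), (1/2 : ℝ) ^ k := by
          rw [Finset.mul_sum]
      _ ≤ Real.exp (-a) * 2 :=
          mul_le_mul_of_nonneg_left (sum_geometric_two_le _) (Real.exp_pos _).le
      _ = 2 * Real.exp (-a) := by ring
    calc ∑ i : Fin m, ∫ ω, ∑ k ∈ Finset.range (n + 1),
        (B k i).indicator (fun _ => (1:ℝ)) ω ∂P
        ≤ ∑ _i : Fin m, 2 * Real.exp (-a) := Finset.sum_le_sum fun i _ => hone i
    _ = m * (2 * Real.exp (-a)) := by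
        rw [Finset.sum_const, Finset.card_univ, Fintype.card_fin, nsmul_eq_mul]
  exact le_trans (integral_mono_ae hTint hGint hTleG) hEG

end Key

set_option maxHeartbeats 2000000 in
/-- For `m` parallel problems each with `n(m) ≥ 2m` i.i.d. Uniform(0,1) observations,
`T_m = max_{1 ≤ i ≤ m} (n · min_{1 ≤ j ≤ n} U_{i,j})` satisfies
`liminf_{m → ∞} E[T_m]/log m ≥ 1`. -/
theorem stmt12 {Ω : ℕ → Type*} [∀ m, MeasurableSpace (Ω m)]
    (P : ∀ m, Measure (Ω m)) [∀ m, IsProbabilityMeasure (P m)]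
    (N : ℕ → ℕ) (hN : ∀ m, 2 * m ≤ N m)
    (U : ∀ m, Fin m × Fin (N m) → Ω m → ℝ)
    (hmeas : ∀ m p, Measurable (U m p))
    (hindep : ∀ m, iIndepFun (U m) (P m))
    (hunif : ∀ m p, (P m).map (U m p) = volume.restrict (Set.Ioo (0 : ℝ) 1)) :
    1 ≤ liminf
      (fun m : ℕ =>
        (∫ ω, (⨆ i : Fin m, (N m : ℝ) * ⨅ j : Fin (N m), U m (i, j) ω) ∂(P m)) /
          Real.log m)
      atTop := by
  classical
  set b : ℕ → ℝ := fun m => (1 - 1 / Real.sqrt (Real.log m)) *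
    (1 - Real.exp 4 * Real.exp (-Real.sqrt (Real.log m))) with hb_def
  have hlogm : Tendsto (fun m : ℕ => Real.log m) atTop atTop :=
    Real.tendsto_log_atTop.comp tendsto_natCast_atTop_atTop
  have hsqrt : Tendsto Real.sqrt atTop atTop := by
    refine tendsto_atTop.2 fun c => ?_
    filter_upwards [eventually_ge_atTop (c ^ 2)] with x h1
    calc c ≤ |c| := le_abs_self c
    _ = Real.sqrt (c ^ 2) := (Real.sqrt_sq_eq_abs c).symm
    _ ≤ Real.sqrt x := Real.sqrt_le_sqrt h1
  have hsl : Tendsto (fun m : ℕ => Real.sqrt (Real.log m)) atTop atTop := hsqrt.comp hlogm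
  have hb_lim : Tendsto b atTop (nhds 1) := by
    have h0 : Tendsto (fun m : ℕ => (Real.sqrt (Real.log m))⁻¹) atTop (nhds 0) :=
      tendsto_inv_atTop_zero.comp hsl
    have h1 : Tendsto (fun m : ℕ => 1 - 1 / Real.sqrt (Real.log m)) atTop (nhds 1) := by
      have h := (tendsto_const_nhds (x := (1:ℝ)) (f := atTop)).sub h0
      rw [sub_zero] at h
      exact h.congr fun m => by rw [one_div]
    have h2 : Tendsto (fun m : ℕ => 1 - Real.exp 4 * Real.exp (-Real.sqrt (Real.log m)))
        atTop (nhds 1) := by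
      have he : Tendsto (fun m : ℕ => Real.exp (-Real.sqrt (Real.log m))) atTop (nhds 0) :=
        Real.tendsto_exp_atBot.comp (tendsto_neg_atTop_atBot.comp hsl)
      have h := (tendsto_const_nhds (x := (1:ℝ)) (f := atTop)).sub (he.const_mul (Real.exp 4))
      rw [mul_zero, sub_zero] at h
      exact h
    have h := h1.mul h2
    rw [mul_one] at h
    exact h
  -- eventual lower bound
  have hlow : ∀ᶠ m in atTop, b m ≤
      (∫ ω, (⨆ i : Fin m, (N m : ℝ) * ⨅ j : Fin (N m), U m (i, j) ω) ∂(P m)) /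
        Real.log m := by
    filter_upwards [eventually_ge_atTop 3, hlogm.eventually_ge_atTop 1] with m hm3 hL1
    have hm1 : 1 ≤ m := by omega
    have hm0 : (0:ℝ) < m := by exact_mod_cast (by omega : 0 < m)
    have hn1 : 1 ≤ N m := le_trans (by omega) (hN m)
    have hn0 : (0:ℝ) < N m := by exact_mod_cast (by omega : 0 < N m)
    have hn2m : (2:ℝ) * m ≤ N m := by exact_mod_cast hN m
    set L : ℝ := Real.log m with hL_def
    have hL0 : 0 < L := lt_of_lt_of_le one_pos hL1
    have hsL0 : 0 < Real.sqrt L := Real.sqrt_pos.2 hL0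
    have hsqL : Real.sqrt L * Real.sqrt L = L := Real.mul_self_sqrt hL0.le
    have hsLle : Real.sqrt L ≤ L := by nlinarith
    set t : ℝ := L - Real.sqrt L with ht_def
    have ht0 : 0 ≤ t := by rw [ht_def]; linarith
    have htL : t ≤ L := by rw [ht_def]; linarith
    have hLm : L ≤ m := le_trans (Real.log_le_sub_one_of_pos hm0) (by linarith)
    set s : ℝ := t / N m with hs_def
    have hs0 : 0 ≤ s := div_nonneg ht0 hn0.le
    have hs_half : s ≤ 1 / 2 := by
      rw [hs_def, div_le_iff₀ hn0]
      calc t ≤ L := htL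
      _ ≤ m := hLm
      _ = 1 / 2 * (2 * m) := by ring
      _ ≤ 1 / 2 * N m := by linarith
    have hs1 : s < 1 := lt_of_le_of_lt hs_half (by norm_num)
    have hkey := key_lower (P := P m) hm1 hn1 (hmeas m) (hindep m) (hunif m) hs0 hs1
    have hns : (N m : ℝ) * s = t := by
      rw [hs_def]; field_simp
    have hq_low : Real.exp (-(t + 4)) ≤ (1 - s) ^ (N m) := by
      have hx0 : (0:ℝ) < 1 - s := by linarith
      have hstep : Real.exp (-(s / (1 - s))) ≤ 1 - s := by
        have h := Real.add_one_le_exp (s / (1 - s))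
        have hx1 : s / (1 - s) + 1 = 1 / (1 - s) := by rw [div_add_one hx0.ne']; ring
        have h2 : (1:ℝ) / (1 - s) ≤ Real.exp (s / (1 - s)) := by linarith
        have h3 : (0:ℝ) < 1 / (1 - s) := by positivity
        calc Real.exp (-(s / (1 - s))) = (Real.exp (s / (1 - s)))⁻¹ := Real.exp_neg _
        _ ≤ ((1:ℝ) / (1 - s))⁻¹ := inv_anti₀ h3 h2
        _ = 1 - s := by field_simp
      have hpow : Real.exp (-(s / (1 - s))) ^ (N m) ≤ (1 - s) ^ (N m) :=
        pow_le_pow_left₀ (Real.exp_pos _).le hstep _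
      have heq : Real.exp (-(s / (1 - s))) ^ (N m) = Real.exp (-((N m : ℝ) * s / (1 - s))) := by
        rw [← Real.exp_nat_mul]
        congr 1
        ring
      have hts : (N m : ℝ) * s / (1 - s) ≤ t + 4 := by
        have h4 : 1 / (1 - s) ≤ 1 + 2 * s := by
          rw [div_le_iff₀ hx0]
          nlinarith
        have hL2m : L ^ 2 ≤ 4 * m := by
          have hsm0 : (0:ℝ) < Real.sqrt m := Real.sqrt_pos.2 hm0
          have h5 : L ≤ 2 * Real.sqrt m := by
            have h6 : Real.log (Real.sqrt m) ≤ Real.sqrt m :=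
              le_trans (Real.log_le_sub_one_of_pos hsm0) (by linarith)
            have h7 : L = 2 * Real.log (Real.sqrt m) := by
              rw [Real.log_sqrt (le_of_lt hm0)]; ring
            linarith
          nlinarith [Real.sq_sqrt hm0.le]
        have h8 : 2 * (t * s) ≤ 4 := by
          have h9 : t * s = t ^ 2 / N m := by rw [hs_def]; ring
          have h10 : t ^ 2 / (N m : ℝ) ≤ L ^ 2 / (2 * m) := by
            apply div_le_div₀ (by positivity) (by nlinarith) (by positivity) hn2m
          have h11 : L ^ 2 / (2 * m) ≤ 2 := by
            rw [div_le_iff₀ (by positivity)]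
            linarith
          nlinarith [h9, h10, h11]
        calc (N m : ℝ) * s / (1 - s) = t / (1 - s) := by rw [hns]
        _ = t * (1 / (1 - s)) := by ring
        _ ≤ t * (1 + 2 * s) := mul_le_mul_of_nonneg_left h4 ht0
        _ = t + 2 * (t * s) := by ring
        _ ≤ t + 4 := by linarith
      calc Real.exp (-(t + 4)) ≤ Real.exp (-((N m : ℝ) * s / (1 - s))) :=
            Real.exp_le_exp.2 (by linarith)
      _ = Real.exp (-(s / (1 - s))) ^ (N m) := heq.symm
      _ ≤ (1 - s) ^ (N m) := hpow
    have hmq : Real.exp (Real.sqrt L - 4) ≤ (m : ℝ) * (1 - s) ^ (N m) := by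
      have hme : (m : ℝ) = Real.exp L := (Real.exp_log hm0).symm
      calc Real.exp (Real.sqrt L - 4) = Real.exp L * Real.exp (-(t + 4)) := by
            rw [← Real.exp_add]; congr 1; rw [ht_def]; ring
      _ ≤ Real.exp L * (1 - s) ^ (N m) :=
            mul_le_mul_of_nonneg_left hq_low (Real.exp_pos _).le
      _ = (m : ℝ) * (1 - s) ^ (N m) := by rw [hme]
    have hinv : 1 / ((m : ℝ) * (1 - s) ^ (N m)) ≤ Real.exp 4 * Real.exp (-Real.sqrt L) := by
      have h12 : (0:ℝ) < Real.exp (Real.sqrt L - 4) := Real.exp_pos _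
      calc 1 / ((m : ℝ) * (1 - s) ^ (N m)) ≤ 1 / Real.exp (Real.sqrt L - 4) :=
            one_div_le_one_div_of_le h12 hmq
      _ = Real.exp 4 * Real.exp (-Real.sqrt L) := by
            rw [one_div, ← Real.exp_neg, ← Real.exp_add]; congr 1; ring
    have hfac : 1 - Real.exp 4 * Real.exp (-Real.sqrt L)
        ≤ 1 - 1 / ((m : ℝ) * (1 - s) ^ (N m)) := by linarith
    have hstep2 : t * (1 - Real.exp 4 * Real.exp (-Real.sqrt L))
        ≤ ∫ ω, (⨆ i : Fin m, (N m : ℝ) * ⨅ j : Fin (N m), U m (i, j) ω) ∂(P m) := by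
      calc t * (1 - Real.exp 4 * Real.exp (-Real.sqrt L))
          ≤ t * (1 - 1 / ((m : ℝ) * (1 - s) ^ (N m))) :=
            mul_le_mul_of_nonneg_left hfac ht0
      _ = (N m : ℝ) * s * (1 - 1 / ((m : ℝ) * (1 - s) ^ (N m))) := by rw [hns]
      _ ≤ _ := hkey
    have hbm : b m = t * (1 - Real.exp 4 * Real.exp (-Real.sqrt L)) / L := by
      have h13 : (1:ℝ) - 1 / Real.sqrt L = t / L := by
        rw [ht_def, sub_div, div_self hL0.ne']
        congr 1
        rw [div_eq_div_iff hsL0.ne' hL0.ne', one_mul, hsqL]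
      rw [hb_def]
      simp only [← hL_def]
      rw [h13]
      ring
    rw [hbm]
    exact (div_le_div_iff_of_pos_right hL0).2 hstep2
  -- eventual upper bound
  have hupp : ∀ᶠ m in atTop,
      (∫ ω, (⨆ i : Fin m, (N m : ℝ) * ⨅ j : Fin (N m), U m (i, j) ω) ∂(P m)) /
        Real.log m ≤ 3 := by
    filter_upwards [eventually_ge_atTop 1, hlogm.eventually_ge_atTop 1] with m hm1 hL1
    have hm0 : (0:ℝ) < m := by exact_mod_cast (by omega : 0 < m)
    have hn1 : 1 ≤ N m := le_trans (by omega) (hN m)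
    set L : ℝ := Real.log m with hL_def
    have hL0 : 0 < L := lt_of_lt_of_le one_pos hL1
    have hkey := key_upper (P := P m) hm1 hn1 (hmeas m) (hindep m) (hunif m) hL0.le
    have hexp : Real.exp (-L) = 1 / (m : ℝ) := by
      rw [Real.exp_neg, Real.exp_log hm0, one_div]
    have h2 : (m : ℝ) * (2 * Real.exp (-L)) = 2 := by
      rw [hexp]; field_simp
    rw [div_le_iff₀ hL0]
    calc (∫ ω, (⨆ i : Fin m, (N m : ℝ) * ⨅ j : Fin (N m), U m (i, j) ω) ∂(P m))
        ≤ L + (m : ℝ) * (2 * Real.exp (-L)) := hkey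
    _ = L + 2 := by rw [h2]
    _ ≤ 3 * L := by linarith
  -- conclude
  have hcobound : IsCoboundedUnder (· ≥ ·) atTop
      (fun m : ℕ =>
        (∫ ω, (⨆ i : Fin m, (N m : ℝ) * ⨅ j : Fin (N m), U m (i, j) ω) ∂(P m)) /
          Real.log m) := by
    refine Filter.IsBoundedUnder.isCoboundedUnder_ge ⟨3, ?_⟩
    simpa [Filter.eventually_map] using hupp
  have hbound : IsBoundedUnder (· ≥ ·) atTop b := hb_lim.isBoundedUnder_ge
  calc (1:ℝ) = liminf b atTop := (hb_lim.liminf_eq).symm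
  _ ≤ _ := liminf_le_liminf hlow hbound hcobound
end

section
/- Let r ≥ 1 and γ ≥ 1 be integers, let 0 ≤ k₀ ≤ r be an integer, and let p ∈ (0,1]. Then Σ_{k=k₀}^r (k+1)^{−γ} · C(r,k) p^k (1−p)^{r−k} ≥ ( p^{−γ} / ∏_{l=1}^γ (r+l) ) · Σ_{j=k₀+γ}^{r+γ} C(r+γ, j) p^j (1−p)^{r+γ−j}. -/
lemma key_choose_prod (r γ : ℕ) (k : ℕ) :
    Nat.choose r k * ∏ l ∈ Finset.Icc 1 γ, (r + l) =
      Nat.choose (r + γ) (k + γ) * ∏ l ∈ Finset.Icc 1 γ, (k + l) := by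
  induction γ with
  | zero => simp
  | succ γ ih =>
    rw [Finset.prod_Icc_succ_top (by omega), Finset.prod_Icc_succ_top (by omega),
      ← mul_assoc, ← mul_assoc, ih]
    have heq : Nat.choose (r + γ) (k + γ) * (r + (γ + 1))
        = Nat.choose (r + (γ + 1)) (k + (γ + 1)) * (k + (γ + 1)) := by
      have h := Nat.add_one_mul_choose_eq (r + γ) (k + γ)
      rw [show r + (γ + 1) = r + γ + 1 by omega, mul_comm, h]
      congr 1 <;> omega
    rw [mul_right_comm, heq, mul_right_comm]

/-- Binomial inverse-moment lower bound. -/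
theorem stmt14 (r γ k₀ : ℕ) (hr : 1 ≤ r) (hγ : 1 ≤ γ) (hk₀ : k₀ ≤ r)
    (p : ℝ) (hp0 : 0 < p) (hp1 : p ≤ 1) :
    p ^ (-(γ : ℤ)) / (∏ l ∈ Finset.Icc 1 γ, ((r : ℝ) + l)) *
        ∑ j ∈ Finset.Icc (k₀ + γ) (r + γ),
          (Nat.choose (r + γ) j : ℝ) * p ^ j * (1 - p) ^ (r + γ - j) ≤
      ∑ k ∈ Finset.Icc k₀ r,
        ((k : ℝ) + 1) ^ (-(γ : ℤ)) * (Nat.choose r k : ℝ) * p ^ k * (1 - p) ^ (r - k) := by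
  have hq : (0:ℝ) ≤ 1 - p := by linarith
  set P : ℝ := ∏ l ∈ Finset.Icc 1 γ, ((r : ℝ) + l) with hP
  have hPpos : 0 < P := by
    apply Finset.prod_pos
    intro l hl
    have := (Finset.mem_Icc.mp hl).1
    have h1 : (1:ℝ) ≤ l := by exact_mod_cast this
    have h2 : (0:ℝ) ≤ r := Nat.cast_nonneg r
    linarith
  have hsum : ∑ j ∈ Finset.Icc (k₀ + γ) (r + γ),
        (Nat.choose (r + γ) j : ℝ) * p ^ j * (1 - p) ^ (r + γ - j)
      = ∑ k ∈ Finset.Icc k₀ r,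
        (Nat.choose (r + γ) (k + γ) : ℝ) * p ^ (k + γ) * (1 - p) ^ (r - k) := by
    rw [← Finset.map_add_right_Icc, Finset.sum_map]
    apply Finset.sum_congr rfl
    intro k hk
    have h1 : r + γ - (k + γ) = r - k := by omega
    simp [addRightEmbedding, h1]
  rw [hsum, Finset.mul_sum]
  apply Finset.sum_le_sum
  intro k hk
  simp only [Finset.mem_Icc] at hk
  set Q : ℝ := ∏ l ∈ Finset.Icc 1 γ, ((k : ℝ) + l) with hQ
  have hQpos : 0 < Q := by
    apply Finset.prod_pos
    intro l hl
    have := (Finset.mem_Icc.mp hl).1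
    have h1 : (1:ℝ) ≤ l := by exact_mod_cast this
    have h2 : (0:ℝ) ≤ k := Nat.cast_nonneg k
    linarith
  have hid : (Nat.choose r k : ℝ) * P = (Nat.choose (r + γ) (k + γ) : ℝ) * Q := by
    have := key_choose_prod r γ k
    have := congrArg (Nat.cast : ℕ → ℝ) this
    push_cast at this
    rw [hP, hQ]
    exact this
  have hk1pos : (0:ℝ) < ((k:ℝ) + 1) ^ γ := by positivity
  have hQle : ((k:ℝ) + 1) ^ γ ≤ Q := by
    rw [hQ]
    calc ((k:ℝ) + 1) ^ γ = ∏ _l ∈ Finset.Icc 1 γ, ((k:ℝ) + 1) := by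
          rw [Finset.prod_const, Nat.card_Icc]; norm_num
      _ ≤ ∏ l ∈ Finset.Icc 1 γ, ((k : ℝ) + l) := by
          apply Finset.prod_le_prod
          · intro l hl; positivity
          · intro l hl
            simp only [Finset.mem_Icc] at hl
            have : (1:ℝ) ≤ l := by exact_mod_cast hl.1
            linarith
  have hkey : (Nat.choose (r + γ) (k + γ) : ℝ) / P ≤ (Nat.choose r k : ℝ) / ((k:ℝ) + 1) ^ γ := by
    rw [div_le_div_iff₀ hPpos hk1pos]
    calc (Nat.choose (r + γ) (k + γ) : ℝ) * ((k:ℝ) + 1) ^ γ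
        ≤ (Nat.choose (r + γ) (k + γ) : ℝ) * Q := by
          apply mul_le_mul_of_nonneg_left hQle (by positivity)
      _ = (Nat.choose r k : ℝ) * P := hid.symm
  have hpγ : (0:ℝ) < p ^ γ := by positivity
  have h1 : p ^ (-(γ : ℤ)) / P *
      ((Nat.choose (r + γ) (k + γ) : ℝ) * p ^ (k + γ) * (1 - p) ^ (r - k))
      = (Nat.choose (r + γ) (k + γ) : ℝ) / P * (p ^ k * (1 - p) ^ (r - k)) := by
    rw [zpow_neg, zpow_natCast, pow_add]
    field_simp
  have h2 : ((k : ℝ) + 1) ^ (-(γ : ℤ)) * (Nat.choose r k : ℝ) * p ^ k * (1 - p) ^ (r - k)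
      = (Nat.choose r k : ℝ) / ((k:ℝ) + 1) ^ γ * (p ^ k * (1 - p) ^ (r - k)) := by
    rw [zpow_neg, zpow_natCast]
    field_simp
  rw [h1, h2]
  apply mul_le_mul_of_nonneg_right hkey
  exact mul_nonneg (pow_nonneg hp0.le _) (pow_nonneg hq _)
end

section
/- Let ν be a probability measure on a measurable space E, and let g₁, g₂ : E → ℝ be measurable functions taking values in {0,1}. For i = 1,2 let P_i be the law on E × ℝ of (X, g_i(X) + Z), where X has law ν and Z is an independent standard Gaussian N(0,1). Then KL(P_1 ‖ P_2) = (1/2) · ν({x ∈ E : g₁(x) ≠ g₂(x)}). -/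
open MeasureTheory ProbabilityTheory
open scoped ENNReal Classical

/-- The Kullback–Leibler divergence `KL(P ‖ Q)`, equal to `∫ log(dP/dQ) dP` when `P ≪ Q`
and the log-likelihood ratio is integrable, and `∞` otherwise. -/
noncomputable def klDiv {α : Type*} [MeasurableSpace α] (P Q : Measure α) : ℝ≥0∞ :=
  if P ≪ Q ∧ Integrable (fun x => Real.log (P.rnDeriv Q x).toReal) P then
    ENNReal.ofReal (∫ x, Real.log (P.rnDeriv Q x).toReal ∂P)
  else ⊤

section helpers
open Real
open scoped NNReal

lemma mapA {E : Type*} [MeasurableSpace E] (ν : Measure E) [SigmaFinite ν]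
    (g : E → ℝ) (hg : Measurable g) :
    (ν.prod (gaussianReal 0 1)).map (fun p : E × ℝ => (p.1, g p.1 + p.2))
      = (ν.prod volume).withDensity (fun p => gaussianPDF (g p.1) 1 p.2) := by
  have hT : Measurable (fun p : E × ℝ => (p.1, g p.1 + p.2)) :=
    measurable_fst.prodMk ((hg.comp measurable_fst).add measurable_snd)
  have hf : Measurable (fun p : E × ℝ => gaussianPDF (g p.1) 1 p.2) := by
    unfold gaussianPDF gaussianPDFReal
    fun_prop
  ext s hs
  rw [Measure.map_apply hT hs, Measure.prod_apply (hT hs), withDensity_apply _ hs,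
    ← lintegral_indicator hs _, lintegral_prod _ (hf.indicator hs).aemeasurable]
  refine lintegral_congr fun x => ?_
  have h1 : ∀ y : ℝ, s.indicator (fun p : E × ℝ => gaussianPDF (g p.1) 1 p.2) (x, y)
      = (Prod.mk x ⁻¹' s).indicator (fun y => gaussianPDF (g x) 1 y) y := by
    intro y; by_cases h : (x, y) ∈ s <;> simp [Set.indicator, h]
  simp_rw [h1]
  rw [lintegral_indicator (measurable_prodMk_left hs) _, ← gaussianReal_apply _ one_ne_zero]
  have h2 : Prod.mk x ⁻¹' ((fun p : E × ℝ => (p.1, g p.1 + p.2)) ⁻¹' s)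
      = (fun z => g x + z) ⁻¹' (Prod.mk x ⁻¹' s) := rfl
  rw [h2, ← Measure.map_apply (by fun_prop) (measurable_prodMk_left hs),
    gaussianReal_map_const_add, zero_add]

lemma pdf_ratio (a b y : ℝ) :
    gaussianPDF a 1 y
      = gaussianPDF b 1 y * ENNReal.ofReal (Real.exp (((y-b)^2 - (y-a)^2)/2)) := by
  rw [gaussianPDF, gaussianPDF, ← ENNReal.ofReal_mul (gaussianPDFReal_nonneg _ _ _)]
  congr 1
  simp only [gaussianPDFReal, NNReal.coe_one, mul_one]
  rw [mul_assoc, ← Real.exp_add]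
  congr 2
  ring

lemma intGauss : Integrable (fun z : ℝ => z) (gaussianReal 0 1) := by
  rw [gaussianReal_of_var_ne_zero _ one_ne_zero,
    integrable_withDensity_iff (measurable_gaussianPDF _ _)
      (ae_of_all _ fun x => ENNReal.ofReal_lt_top)]
  have hpt : ∀ x : ℝ, (gaussianPDF 0 1 x).toReal = gaussianPDFReal 0 1 x :=
    fun x => ENNReal.toReal_ofReal (gaussianPDFReal_nonneg _ _ _)
  simp only [hpt]
  have h2 := (integrable_mul_exp_neg_mul_sq (b := (2:ℝ)⁻¹) (by norm_num)).const_mul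
    ((√(2*π))⁻¹)
  apply h2.congr (ae_of_all _ fun x => ?_)
  simp only [gaussianPDFReal, NNReal.coe_one, mul_one, sub_zero]
  ring_nf

lemma meanGauss : ∫ z, z ∂(gaussianReal 0 1) = 0 := by
  have hsym : (gaussianReal 0 1).map (fun x : ℝ => -x) = gaussianReal 0 1 := by
    have h := gaussianReal_map_const_mul (μ := 0) (v := 1) (-1)
    have h1 : (fun x : ℝ => -1 * x) = fun x : ℝ => -x := by funext x; ring
    have h2 : (NNReal.mk ((-1:ℝ)^2) (sq_nonneg _)) * 1 = 1 := by
      apply NNReal.eq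
      simp
    rw [h1, h2] at h
    simpa using h
  have h1 : ∫ z, (fun y : ℝ => y) z ∂((gaussianReal 0 1).map (fun x : ℝ => -x))
      = ∫ x, -x ∂(gaussianReal 0 1) :=
    integral_map measurable_neg.aemeasurable aestronglyMeasurable_id
  rw [hsym] at h1
  rw [integral_neg] at h1
  linarith
end helpers

/-- For two change-plane regression models `Y = g_i(X) + Z` with `g_i` taking values in
`{0,1}`, `X ~ ν` and `Z ~ N(0,1)` independent, the KL divergence between the laws of
`(X, Y)` equals `(1/2)·ν(g₁ ≠ g₂)`. -/
theorem stmt17 {E : Type*} [MeasurableSpace E] (ν : Measure E) [IsProbabilityMeasure ν]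
    (g₁ g₂ : E → ℝ) (hg₁ : Measurable g₁) (hg₂ : Measurable g₂)
    (hb₁ : ∀ x, g₁ x = 0 ∨ g₁ x = 1) (hb₂ : ∀ x, g₂ x = 0 ∨ g₂ x = 1) :
    klDiv ((ν.prod (gaussianReal 0 1)).map (fun p : E × ℝ => (p.1, g₁ p.1 + p.2)))
        ((ν.prod (gaussianReal 0 1)).map (fun p : E × ℝ => (p.1, g₂ p.1 + p.2))) =
      ENNReal.ofReal (1 / 2) * ν {x | g₁ x ≠ g₂ x} := by
  set γ := gaussianReal 0 1 with hγ
  set μ := ν.prod γ with hμ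
  set d : E → ℝ := fun x => g₁ x - g₂ x with hd
  have hdm : Measurable d := hg₁.sub hg₂
  set ℓ : E × ℝ → ℝ := fun p => ((p.2 - g₂ p.1)^2 - (p.2 - g₁ p.1)^2)/2 with hℓ
  have hℓm : Measurable ℓ := by
    apply Measurable.div_const
    exact (((measurable_snd.sub (hg₂.comp measurable_fst)).pow_const 2).sub
      ((measurable_snd.sub (hg₁.comp measurable_fst)).pow_const 2))
  set T₁ : E × ℝ → E × ℝ := fun p => (p.1, g₁ p.1 + p.2) with hT1d
  set T₂ : E × ℝ → E × ℝ := fun p => (p.1, g₂ p.1 + p.2) with hT2d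
  have hT₁ : Measurable T₁ := measurable_fst.prodMk ((hg₁.comp measurable_fst).add measurable_snd)
  have hT₂ : Measurable T₂ := measurable_fst.prodMk ((hg₂.comp measurable_fst).add measurable_snd)
  set P₁ := μ.map T₁ with hP1
  set P₂ := μ.map T₂ with hP2
  have hfm : ∀ g : E → ℝ, Measurable g →
      Measurable (fun p : E × ℝ => gaussianPDF (g p.1) 1 p.2) := by
    intro g hg
    unfold gaussianPDF gaussianPDFReal
    fun_prop
  have hr : Measurable (fun p : E × ℝ => ENNReal.ofReal (Real.exp (ℓ p))) := by fun_prop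
  have hPP : P₁ = P₂.withDensity (fun p => ENNReal.ofReal (Real.exp (ℓ p))) := by
    rw [hP1, hP2, hμ, hγ, mapA ν g₁ hg₁, mapA ν g₂ hg₂, ← withDensity_mul _ (hfm g₂ hg₂) hr]
    congr 1
    funext p
    simp only [Pi.mul_apply, hℓ]
    exact pdf_ratio _ _ _
  have hac : P₁ ≪ P₂ := hPP ▸ withDensity_absolutelyContinuous _ _
  have inst2 : IsProbabilityMeasure P₂ := Measure.isProbabilityMeasure_map hT₂.aemeasurable
  have inst1 : IsProbabilityMeasure P₁ := Measure.isProbabilityMeasure_map hT₁.aemeasurable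
  have hrn : P₁.rnDeriv P₂ =ᵐ[P₂] fun p => ENNReal.ofReal (Real.exp (ℓ p)) := by
    rw [hPP]
    exact Measure.rnDeriv_withDensity P₂ hr
  have hrn1 : P₁.rnDeriv P₂ =ᵐ[P₁] fun p => ENNReal.ofReal (Real.exp (ℓ p)) :=
    hrn.filter_mono hac.ae_le
  have hlog : (fun p => Real.log (P₁.rnDeriv P₂ p).toReal) =ᵐ[P₁] ℓ := by
    filter_upwards [hrn1] with p hp
    rw [hp, ENNReal.toReal_ofReal (Real.exp_nonneg _), Real.log_exp]
  have hcomp : ∀ p : E × ℝ, ℓ (T₁ p) = d p.1 * p.2 + d p.1 ^ 2 / 2 := by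
    intro p
    simp only [hℓ, hT1d, hd]
    ring
  have hdsq : ∀ x, d x ^ 2 = Set.indicator {x | g₁ x ≠ g₂ x} (fun _ => (1:ℝ)) x := by
    intro x
    by_cases h : g₁ x = g₂ x
    · simp [Set.indicator, h, hd]
    · have hx : x ∈ {x | g₁ x ≠ g₂ x} := h
      rw [Set.indicator_of_mem hx]
      rcases hb₁ x with h1 | h1 <;> rcases hb₂ x with h2 | h2 <;>
        simp [hd, h1, h2] at h ⊢ <;> norm_num
  have hdabs : ∀ x, |d x| ≤ 1 := by
    intro x
    rcases hb₁ x with h1 | h1 <;> rcases hb₂ x with h2 | h2 <;>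
      simp [hd, h1, h2] <;> norm_num
  -- integrability of p.2 under μ
  have hz_int : Integrable (fun p : E × ℝ => p.2) μ := by
    have h0 : Integrable (fun z : ℝ => z) (μ.map Prod.snd) := by
      rw [hμ, Measure.map_snd_prod]
      simpa using intGauss
    exact (integrable_map_measure aestronglyMeasurable_id measurable_snd.aemeasurable).mp h0
  set f : E × ℝ → ℝ := fun p => d p.1 * p.2 + d p.1 ^ 2 / 2 with hfd
  have hfmeas : Measurable f := by
    exact ((hdm.comp measurable_fst).mul measurable_snd).add
      (((hdm.comp measurable_fst).pow_const 2).div_const 2)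
  have hF : Integrable f μ := by
    have hbound : Integrable (fun p : E × ℝ => |p.2| + 1/2) μ :=
      hz_int.abs.add (integrable_const _)
    refine hbound.mono hfmeas.aestronglyMeasurable (ae_of_all _ fun p => ?_)
    have h1 : ‖f p‖ ≤ |d p.1| * |p.2| + |d p.1| ^ 2 / 2 := by
      rw [Real.norm_eq_abs]
      calc |d p.1 * p.2 + d p.1 ^ 2 / 2| ≤ |d p.1 * p.2| + |d p.1 ^ 2 / 2| := abs_add_le _ _
        _ = |d p.1| * |p.2| + |d p.1| ^ 2 / 2 := by rw [abs_mul, abs_div, abs_pow]; norm_num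
    have h2 : |d p.1| * |p.2| + |d p.1| ^ 2 / 2 ≤ |p.2| + 1/2 := by
      have := hdabs p.1
      have h3 : |d p.1| * |p.2| ≤ 1 * |p.2| :=
        mul_le_mul_of_nonneg_right this (abs_nonneg _)
      have h4 : |d p.1| ^ 2 ≤ 1 ^ 2 := by
        apply pow_le_pow_left₀ (abs_nonneg _) this
      nlinarith
    calc ‖f p‖ ≤ |p.2| + 1/2 := h1.trans h2
      _ ≤ ‖|p.2| + 1/2‖ := le_abs_self _
  have hcompeq : (fun p => ℓ (T₁ p)) = f := funext hcomp
  have hint1 : Integrable (fun p => Real.log (P₁.rnDeriv P₂ p).toReal) P₁ := by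
    rw [integrable_congr hlog, hP1,
      integrable_map_measure hℓm.aestronglyMeasurable hT₁.aemeasurable]
    exact hF.congr (ae_of_all _ fun p => (hcomp p).symm)
  have hsm : MeasurableSet {x | g₁ x ≠ g₂ x} := by
    have : {x | g₁ x ≠ g₂ x} = {x | g₁ x = g₂ x}ᶜ := rfl
    rw [this]
    exact (measurableSet_eq_fun hg₁ hg₂).compl
  have hI : ∫ p, Real.log (P₁.rnDeriv P₂ p).toReal ∂P₁
      = 1/2 * (ν {x | g₁ x ≠ g₂ x}).toReal := by
    rw [integral_congr_ae hlog, hP1, integral_map hT₁.aemeasurable hℓm.aestronglyMeasurable]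
    have : (fun p => ℓ (T₁ p)) = f := hcompeq
    rw [this, hμ, integral_prod _ (hμ ▸ hF)]
    have inner : ∀ x, ∫ z, f (x, z) ∂γ = d x ^ 2 / 2 := by
      intro x
      simp only [hfd]
      rw [integral_add (intGauss.const_mul _) (integrable_const _), integral_const_mul,
        meanGauss, integral_const]
      simp
    change ∫ x, ∫ z, f (x, z) ∂γ ∂ν = _
    simp_rw [inner]
    have h5 : ∀ x, d x ^ 2 / 2 = (1/2) * Set.indicator {x | g₁ x ≠ g₂ x} (fun _ => (1:ℝ)) x := by
      intro x; rw [hdsq x]; ring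
    simp_rw [h5]
    rw [integral_const_mul, ← Pi.one_def, integral_indicator_one hsm, measureReal_def]
  unfold klDiv
  rw [if_pos ⟨hac, hint1⟩, hI, ENNReal.ofReal_mul (by norm_num)]
  congr 1
  exact ENNReal.ofReal_toReal (measure_ne_top ν _)
end
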